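/- arXiv:1207.0673 — 7 statements merged into one kernel-verified Lean document; each statement's English description precedes it below -/
import Mathlib

section
/- The mutation matrix is lumpable with respect to the Hamming class: for all b, c ∈ {0,…,ℓ} and every chromosome u ∈ 𝒜^ℓ with H(u) = b, one has Σ_{w ∈ 𝒜^ℓ : H(w) = c} M(u,w) = M_H(b,c), where M_H(b,c) is given by the explicit formula in the context. In particular this sum depends on u only through b = H(u). -/
open Finset

/-- Mutation matrix `M(u,v)`. -/
noncomputable def mutM (κ : ℕ) (q : ℝ) {ℓ : ℕ} (u v : Fin ℓ → Fin κ) : ℝ :=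
  ∏ j, if u j = v j then 1 - q else q / ((κ : ℝ) - 1)

/-- Lumped mutation matrix `M_H(b,c)`. -/
noncomputable def MH (κ ℓ : ℕ) (q : ℝ) (b c : ℕ) : ℝ :=
  ∑ k ∈ range (ℓ - b + 1), ∑ l ∈ range (b + 1),
    if (k : ℤ) - (l : ℤ) = (c : ℤ) - (b : ℤ) then
      ((ℓ - b).choose k : ℝ) * (b.choose l : ℝ) * q ^ k * (1 - q) ^ (ℓ - b - k) *
        (q / ((κ : ℝ) - 1)) ^ l * (1 - q / ((κ : ℝ) - 1)) ^ (b - l)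
    else 0

open Polynomial in
lemma coeff_linear_pow (a b : ℝ) (m i : ℕ) :
    ((C a + C b * X : Polynomial ℝ) ^ m).coeff i = (m.choose i : ℝ) * b ^ i * a ^ (m - i) := by
  rw [add_comm, add_pow, Polynomial.finset_sum_coeff]
  have h : ∀ k ∈ range (m+1),
      ((C b * X) ^ k * (C a) ^ (m - k) * (m.choose k : Polynomial ℝ)).coeff i
        = if i = k then (m.choose k : ℝ) * b ^ k * a ^ (m - k) else 0 := by
    intro k _
    simp only [mul_pow, ← C_pow, ← Polynomial.C_eq_natCast, coeff_mul_C, coeff_C_mul,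
      coeff_X_pow]
    by_cases hk : i = k
    · simp [hk]; ring
    · simp [hk]
  rw [Finset.sum_congr rfl h, Finset.sum_ite_eq (range (m+1))]
  by_cases hi : i ∈ range (m+1)
  · simp [hi]
  · simp only [hi, if_false]
    simp only [Finset.mem_range, not_lt] at hi
    rw [Nat.choose_eq_zero_of_lt (by omega)]
    simp

open Polynomial in
lemma sum_coeff_filter {V : Type*} [Fintype V] (f : V → ℝ) (g : V → ℕ) (c : ℕ) :
    (∑ v : V, C (f v) * X ^ (g v)).coeff c = ∑ v ∈ univ.filter (fun v => g v = c), f v := by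
  rw [Polynomial.finset_sum_coeff, Finset.sum_filter]
  refine Finset.sum_congr rfl fun v _ => ?_
  simp only [coeff_C_mul, coeff_X_pow]
  by_cases h : c = g v
  · simp [h]
  · rw [if_neg h, if_neg (fun hh => h hh.symm)]
    simp

open Polynomial in
lemma gen_id (κ ℓ : ℕ) (hκ : 2 ≤ κ) (q : ℝ) (w u : Fin ℓ → Fin κ) :
    ∑ v : Fin ℓ → Fin κ, C (mutM κ q u v) * X ^ (hammingDist v w)
      = (C (1 - q) + C q * X) ^ (ℓ - hammingDist u w)
        * (C (q / ((κ:ℝ)-1)) + C (1 - q / ((κ:ℝ)-1)) * X) ^ (hammingDist u w) := by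
  have hκR : ((κ:ℝ) - 1) ≠ 0 := by
    have : (2:ℝ) ≤ (κ:ℝ) := by exact_mod_cast hκ
    linarith
  set r : ℝ := q / ((κ:ℝ)-1) with hr
  set F : Fin ℓ → Fin κ → Polynomial ℝ := fun j a =>
    C (if u j = a then 1 - q else r) * X ^ (if a = w j then 0 else 1) with hF
  have step1 : ∀ v : Fin ℓ → Fin κ,
      C (mutM κ q u v) * X ^ (hammingDist v w) = ∏ j, F j (v j) := by
    intro v
    have hH : hammingDist v w = ∑ j, (if v j = w j then 0 else 1) := by
      rw [hammingDist, Finset.card_filter]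
      exact Finset.sum_congr rfl fun j _ => by by_cases h : v j = w j <;> simp [h]
    rw [hH, mutM, map_prod, ← Finset.prod_pow_eq_pow_sum, ← Finset.prod_mul_distrib]
  rw [Finset.sum_congr rfl (fun v _ => step1 v), ← Fintype.piFinset_univ,
    ← Finset.prod_univ_sum]
  have step2 : ∀ j, (∑ a : Fin κ, F j a) =
      if u j = w j then (C (1 - q) + C q * X) else (C r + C (1 - r) * X) := by
    intro j
    by_cases h : u j = w j
    · rw [if_pos h, ← Finset.add_sum_erase _ _ (Finset.mem_univ (w j))]
      have h1 : F j (w j) = C (1 - q) := by simp [hF, h]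
      have h2 : ∀ a ∈ univ.erase (w j), F j a = C r * X := by
        intro a ha
        rw [Finset.mem_erase] at ha
        have : ¬ u j = a := fun hh => ha.1 (by rw [← hh, h])
        simp [hF, this, ha.1]
      rw [h1, Finset.sum_congr rfl h2, Finset.sum_const, Finset.card_erase_of_mem
        (Finset.mem_univ _), Finset.card_univ, Fintype.card_fin, nsmul_eq_mul,
        ← Polynomial.C_eq_natCast, ← mul_assoc, ← C_mul]
      congr 2
      rw [Nat.cast_sub (by omega), Nat.cast_one, hr]
      field_simp
    · rw [if_neg h, ← Finset.add_sum_erase _ _ (Finset.mem_univ (w j)),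
        ← Finset.add_sum_erase _ _ (Finset.mem_erase.2 ⟨h, Finset.mem_univ (u j)⟩)]
      have h1 : F j (w j) = C r := by simp [hF, h]
      have h2 : F j (u j) = C (1 - q) * X := by
        have : ¬ (u j = w j) := h
        simp [hF, this]
      have h3 : ∀ a ∈ (univ.erase (w j)).erase (u j), F j a = C r * X := by
        intro a ha
        rw [Finset.mem_erase, Finset.mem_erase] at ha
        have : ¬ u j = a := fun hh => ha.1 hh.symm
        simp [hF, this, ha.2.1]
      rw [h1, h2, Finset.sum_congr rfl h3, Finset.sum_const, Finset.card_erase_of_mem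
        (Finset.mem_erase.2 ⟨h, Finset.mem_univ (u j)⟩), Finset.card_erase_of_mem
        (Finset.mem_univ _), Finset.card_univ, Fintype.card_fin, nsmul_eq_mul,
        ← Polynomial.C_eq_natCast]
      have hc : ((κ - 1 - 1 : ℕ) : ℝ) = (κ:ℝ) - 2 := by
        rw [Nat.cast_sub (by omega), Nat.cast_sub (by omega)]; push_cast; ring
      rw [hc]
      have : (1 - q : ℝ) + ((κ:ℝ) - 2) * r = 1 - r := by
        rw [hr]; field_simp; ring
      calc C r + (C (1 - q) * X + C ((κ:ℝ) - 2) * (C r * X))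
          = C r + C ((1 - q) + ((κ:ℝ) - 2) * r) * X := by rw [C_add, C_mul]; ring
        _ = C r + C (1 - r) * X := by rw [this]
  rw [Finset.prod_congr rfl (fun j _ => step2 j), Finset.prod_ite, Finset.prod_const,
    Finset.prod_const]
  have hH : (univ.filter fun j => ¬ u j = w j).card = hammingDist u w := rfl
  have hcard : (univ.filter fun j => u j = w j).card = ℓ - hammingDist u w := by
    have h2 := Finset.card_filter_add_card_filter_not (s := (univ : Finset (Fin ℓ)))
      (p := fun j => u j = w j)
    simp only [Finset.card_univ, Fintype.card_fin] at h2
    omega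
  rw [hcard, hH]

lemma reindex (q r : ℝ) (ℓ b c : ℕ) (hb : b ≤ ℓ) (hc : c ≤ ℓ) :
    ∑ i ∈ range (c+1),
      ((((ℓ-b).choose i : ℝ) * q^i * (1-q)^(ℓ-b-i)) *
        (((b.choose (c-i)) : ℝ) * (1-r)^(c-i) * r^(b-(c-i))))
    = ∑ k ∈ range (ℓ - b + 1), ∑ l ∈ range (b + 1),
        (if (k:ℤ) - (l:ℤ) = (c:ℤ) - (b:ℤ) then
          ((ℓ-b).choose k : ℝ) * (b.choose l : ℝ) * q^k * (1-q)^(ℓ-b-k) * r^l * (1-r)^(b-l)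
        else 0) := by
  set A : ℕ → ℝ := fun i => ((ℓ-b).choose i : ℝ) * q^i * (1-q)^(ℓ-b-i) with hA
  set h : ℕ → ℝ := fun k => if k ≤ c ∧ c ≤ k + b then
      A k * (((b.choose (c-k)) : ℝ) * (1-r)^(c-k) * r^(b-(c-k))) else 0 with hh
  have lhs_eq : ∑ i ∈ range (c+1),
      (A i * (((b.choose (c-i)) : ℝ) * (1-r)^(c-i) * r^(b-(c-i)))) = ∑ k ∈ range (ℓ+1), h k := by
    rw [← Finset.sum_subset (Finset.range_subset_range.2 (by omega : c + 1 ≤ ℓ + 1))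
      (fun x _ hx => ?_)]
    · refine Finset.sum_congr rfl fun i hi => ?_
      rw [Finset.mem_range] at hi
      by_cases hci : c ≤ i + b
      · rw [hh]; simp only []
        rw [if_pos ⟨by omega, hci⟩]
      · rw [hh]; simp only []
        rw [if_neg (by omega), Nat.choose_eq_zero_of_lt (by omega)]
        simp
    · rw [Finset.mem_range] at *
      rw [hh]; simp only []
      rw [if_neg (by omega)]
  rw [lhs_eq]
  rw [← Finset.sum_subset (Finset.range_subset_range.2 (by omega : ℓ - b + 1 ≤ ℓ + 1))
    (fun k _ hk => ?_)]
  · refine Finset.sum_congr rfl fun k hk => ?_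
    rw [Finset.mem_range] at hk
    by_cases hkc : k ≤ c ∧ c ≤ k + b
    · rw [hh]; simp only []
      rw [if_pos hkc]
      have hl0 : k + b - c ∈ range (b + 1) := by rw [Finset.mem_range]; omega
      have : ∀ l ∈ range (b+1),
          (if (k:ℤ) - (l:ℤ) = (c:ℤ) - (b:ℤ) then
            ((ℓ-b).choose k : ℝ) * (b.choose l : ℝ) * q^k * (1-q)^(ℓ-b-k) * r^l * (1-r)^(b-l)
          else 0)
          = (if l = k + b - c then
            ((ℓ-b).choose k : ℝ) * (b.choose l : ℝ) * q^k * (1-q)^(ℓ-b-k) * r^l * (1-r)^(b-l)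
          else 0) := by
        intro l hl
        rw [Finset.mem_range] at hl
        by_cases he : l = k + b - c
        · rw [if_pos (by omega), if_pos he]
        · rw [if_neg (by omega), if_neg he]
      rw [Finset.sum_congr rfl this, Finset.sum_ite_eq' _ (k + b - c) _]
      rw [if_pos hl0]
      have e1 : b.choose (k + b - c) = b.choose (c - k) := by
        rw [show k + b - c = b - (c - k) by omega, Nat.choose_symm (by omega)]
      have e2 : b - (k + b - c) = c - k := by omega
      have e3 : b - (c - k) = k + b - c := by omega
      rw [e1, e2, hA]; simp only []
      rw [e3]
      ring
    · rw [hh]; simp only []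
      rw [if_neg hkc]
      refine (Finset.sum_eq_zero fun l hl => ?_).symm
      rw [Finset.mem_range] at hl
      rw [if_neg (by omega)]
  · rw [Finset.mem_range] at *
    rw [hh]; simp only [hA]
    rw [Nat.choose_eq_zero_of_lt (by omega)]
    simp

/-- The mutation matrix is lumpable with respect to the Hamming class: for `u` at
Hamming distance `b` from the master sequence, the total mutation probability to the
Hamming class `c` equals `M_H(b,c)`. -/
theorem mutM_lumpable (κ ℓ : ℕ) (hκ : 2 ≤ κ) (hℓ : 1 ≤ ℓ)
    (q : ℝ) (hq0 : 0 < q) (hq1 : q < 1 - 1 / κ)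
    (w : Fin ℓ → Fin κ) (b c : ℕ) (hb : b ≤ ℓ) (hc : c ≤ ℓ)
    (u : Fin ℓ → Fin κ) (hu : hammingDist u w = b) :
    ∑ v ∈ univ.filter (fun v => hammingDist v w = c), mutM κ q u v = MH κ ℓ q b c := by
  classical
  have key := congrArg (fun p : Polynomial ℝ => p.coeff c) (gen_id κ ℓ hκ q w u)
  simp only [hu] at key
  rw [sum_coeff_filter] at key
  rw [key, Polynomial.coeff_mul, Finset.Nat.sum_antidiagonal_eq_sum_range_succ_mk]
  have hterm : ∀ i ∈ range (c+1),
      ((Polynomial.C (1-q) + Polynomial.C q * Polynomial.X)^(ℓ-b)).coeff i *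
        ((Polynomial.C (q/((κ:ℝ)-1)) + Polynomial.C (1 - q/((κ:ℝ)-1)) * Polynomial.X)^b).coeff (c - i)
      = ((((ℓ-b).choose i : ℝ) * q^i * (1-q)^(ℓ-b-i)) *
        (((b.choose (c-i)) : ℝ) * (1 - q/((κ:ℝ)-1))^(c-i) * (q/((κ:ℝ)-1))^(b-(c-i)))) := by
    intro i _
    rw [coeff_linear_pow, coeff_linear_pow]
  rw [Finset.sum_congr rfl hterm, MH]
  exact reindex q (q/((κ:ℝ)-1)) ℓ b c hb hc
end

section
/- (ℍ-lumpability of the Wright–Fisher model.) For all d, e ∈ {0,…,ℓ}^m and every population x ∈ (𝒜^ℓ)^m with ℍ(x) = d, one has Σ_{z : ℍ(z) = e} p(x,z) = ∏_{i=1}^m (Σ_{k=0}^ℓ F_H(k,d)·M_H(k,e(i))) = p_H(d,e). In particular, if ℍ(x) = ℍ(y) then Σ_{z : ℍ(z) = e} p(x,z) = Σ_{z : ℍ(z) = e} p(y,z) for every e. -/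
open Finset

/-- Sharp peak fitness: `σ` for the master sequence `w`, `1` otherwise. -/
noncomputable def fitness (σ : ℝ) {κ ℓ : ℕ} (w u : Fin ℓ → Fin κ) : ℝ :=
  if u = w then σ else 1

/-- Selection function `F(u,x)`. -/
noncomputable def selF (σ : ℝ) {κ ℓ m : ℕ} (w : Fin ℓ → Fin κ)
    (u : Fin ℓ → Fin κ) (x : Fin m → Fin ℓ → Fin κ) : ℝ :=
  fitness σ w u * (univ.filter fun i => x i = u).card / ∑ i, fitness σ w (x i)

/-- Wright–Fisher transition matrix on populations. -/
noncomputable def wfP (κ : ℕ) (q σ : ℝ) {ℓ m : ℕ} (w : Fin ℓ → Fin κ)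
    (x y : Fin m → Fin ℓ → Fin κ) : ℝ :=
  ∏ i, ∑ u, selF σ w u x * mutM κ q u (y i)

/-- Lumped sharp peak fitness `A_H`. -/
noncomputable def AH (σ : ℝ) (b : ℕ) : ℝ := if b = 0 then σ else 1

/-- Lumped selection function `F_H(k,d)`. -/
noncomputable def FH (σ : ℝ) {m : ℕ} (k : ℕ) (d : Fin m → ℕ) : ℝ :=
  AH σ k * (univ.filter fun i => d i = k).card / ∑ i, AH σ (d i)

/-- Lumped transition matrix `p_H(d,e)` of the distance process. -/
noncomputable def pH (κ ℓ : ℕ) (q σ : ℝ) {m : ℕ} (d e : Fin m → ℕ) : ℝ :=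
  ∏ i, ∑ k ∈ range (ℓ + 1), FH σ k d * MH κ ℓ q k (e i)


namespace WFLump
open Polynomial

lemma binom_poly (a b : ℝ) (n : ℕ) :
    (C a + C b * X)^n = ∑ k ∈ range (n+1), C ((n.choose k : ℝ) * b^k * a^(n-k)) * X^k := by
  rw [add_comm, add_pow]
  refine Finset.sum_congr rfl fun k hk => ?_
  rw [mul_pow, ← C_pow, ← C_pow, ← C_eq_natCast, C_mul, C_mul]
  ring

lemma site_eq {κ : ℕ} (hκ : 2 ≤ κ) (q : ℝ) (a w' : Fin κ) :
    (∑ v : Fin κ, C (if a = v then 1 - q else q/((κ:ℝ)-1)) * X ^ (if v = w' then 0 else 1))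
    = if a = w' then (C (1-q) + C q * X)
      else (C (q/((κ:ℝ)-1)) + C (1 - q/((κ:ℝ)-1)) * X) := by
  have hκ' : ((κ:ℝ) - 1) ≠ 0 := by
    have : (2:ℝ) ≤ (κ:ℝ) := by exact_mod_cast hκ
    linarith
  have hcard : (univ : Finset (Fin κ)).card = κ := by simp
  split_ifs with h
  · rw [← Finset.add_sum_erase _ _ (mem_univ w')]
    have h1 : ∀ v ∈ (univ : Finset (Fin κ)).erase w',
        C (if a = v then 1 - q else q/((κ:ℝ)-1)) * X ^ (if v = w' then 0 else 1)
          = C (q/((κ:ℝ)-1)) * X := by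
      intro v hv
      rw [Finset.mem_erase] at hv
      rw [if_neg (fun hh => hv.1 (hh.symm.trans h)), if_neg hv.1, pow_one]
    rw [Finset.sum_congr rfl h1, Finset.sum_const, Finset.card_erase_of_mem (mem_univ w'), hcard]
    simp only [if_pos rfl, if_pos h, pow_zero, mul_one, nsmul_eq_mul]
    have h2 : ((κ - 1 : ℕ) : Polynomial ℝ) = C ((κ:ℝ) - 1) := by
      rw [← C_eq_natCast]
      congr 1
      push_cast [Nat.cast_sub (by omega : 1 ≤ κ)]
      ring
    rw [h2, ← mul_assoc, ← C_mul]
    have h3 : ((κ:ℝ) - 1) * (q / ((κ:ℝ)-1)) = q := by field_simp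
    rw [h3, if_true, pow_zero, mul_one]
  · have haw : a ∈ (univ : Finset (Fin κ)).erase w' := by simp [h]
    rw [← Finset.add_sum_erase _ _ (mem_univ w'), ← Finset.add_sum_erase _ _ haw]
    have h1 : ∀ v ∈ ((univ : Finset (Fin κ)).erase w').erase a,
        C (if a = v then 1 - q else q/((κ:ℝ)-1)) * X ^ (if v = w' then 0 else 1)
          = C (q/((κ:ℝ)-1)) * X := by
      intro v hv
      rw [Finset.mem_erase, Finset.mem_erase] at hv
      rw [if_neg (fun hh => hv.1 hh.symm), if_neg hv.2.1, pow_one]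
    rw [Finset.sum_congr rfl h1, Finset.sum_const,
      Finset.card_erase_of_mem haw, Finset.card_erase_of_mem (mem_univ w'), hcard]
    simp only [eq_self_iff_true, if_true, if_pos rfl, if_neg h, pow_zero, pow_one, mul_one,
      nsmul_eq_mul]
    have h2 : ((κ - 1 - 1 : ℕ) : Polynomial ℝ) = C ((κ:ℝ) - 2) := by
      rw [← C_eq_natCast]
      congr 1
      push_cast [Nat.cast_sub (by omega : 1 ≤ κ - 1), Nat.cast_sub (by omega : 1 ≤ κ)]
      ring
    rw [h2, ← mul_assoc, ← C_mul, ← add_mul, ← C_add]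
    have h3 : 1 - q + ((κ:ℝ) - 2) * (q / ((κ:ℝ)-1)) = 1 - q / ((κ:ℝ)-1) := by
      field_simp
      ring
    rw [h3]

lemma poly_eq {κ ℓ : ℕ} (hκ : 2 ≤ κ) (q : ℝ) (u w : Fin ℓ → Fin κ) :
    (∑ v : Fin ℓ → Fin κ, C (mutM κ q u v) * X ^ (hammingDist v w))
    = (C (1-q) + C q * X)^(ℓ - hammingDist u w)
        * (C (q/((κ:ℝ)-1)) + C (1 - q/((κ:ℝ)-1)) * X)^(hammingDist u w) := by
  have hterm : ∀ v : Fin ℓ → Fin κ, C (mutM κ q u v) * X ^ (hammingDist v w)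
      = ∏ j, C (if u j = v j then 1 - q else q/((κ:ℝ)-1)) * X ^ (if v j = w j then 0 else 1) := by
    intro v
    have hdist : hammingDist v w = ∑ j, if v j = w j then 0 else 1 := by
      rw [hammingDist, Finset.card_filter]
      exact Finset.sum_congr rfl fun j _ => by by_cases h : v j = w j <;> simp [h]
    rw [hdist, mutM, map_prod, ← Finset.prod_pow_eq_pow_sum, ← Finset.prod_mul_distrib]
  rw [Finset.sum_congr rfl fun v _ => hterm v]
  rw [← Fintype.piFinset_univ,
    ← Finset.prod_univ_sum (fun _ : Fin ℓ => (univ : Finset (Fin κ)))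
      (fun j a => C (if u j = a then 1 - q else q/((κ:ℝ)-1)) * X ^ (if a = w j then 0 else 1))]
  have hsite : ∀ j, (∑ a : Fin κ,
      C (if u j = a then 1 - q else q/((κ:ℝ)-1)) * X ^ (if a = w j then 0 else 1))
      = if u j = w j then (C (1-q) + C q * X)
        else (C (q/((κ:ℝ)-1)) + C (1 - q/((κ:ℝ)-1)) * X) := fun j => site_eq hκ q (u j) (w j)
  rw [Finset.prod_congr rfl fun j _ => hsite j, Finset.prod_ite _ _]
  rw [Finset.prod_const, Finset.prod_const]
  have hcards := Finset.card_filter_add_card_filter_not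
    (s := (univ : Finset (Fin ℓ))) (p := fun j => u j = w j)
  have hH : (univ.filter fun a => ¬ u a = w a).card = hammingDist u w := rfl
  have hcard2 : (univ : Finset (Fin ℓ)).card = ℓ := by simp
  congr 1
  congr 1
  omega

lemma coeff_eq_MH {κ : ℕ} (ℓ : ℕ) (q : ℝ) (b c : ℕ) :
    ((C (1-q) + C q * X)^(ℓ-b)
      * (C (q/((κ:ℝ)-1)) + C (1 - q/((κ:ℝ)-1)) * X)^b).coeff c = MH κ ℓ q b c := by
  rw [binom_poly, binom_poly, Finset.sum_mul_sum, MH]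
  rw [finset_sum_coeff]
  refine Finset.sum_congr rfl fun k hk => ?_
  rw [finset_sum_coeff]
  rw [← Finset.sum_range_reflect]
  refine Finset.sum_congr rfl fun l hl => ?_
  rw [Finset.mem_range] at hl hk
  have hl' : l ≤ b := by omega
  have hrw : C (((ℓ-b).choose k : ℝ) * q^k * (1-q)^(ℓ-b-k)) * X^k *
      (C ((b.choose (b+1-1-l) : ℝ) * (1 - q/((κ:ℝ)-1))^(b+1-1-l)
        * (q/((κ:ℝ)-1))^(b-(b+1-1-l))) * X^(b+1-1-l))
      = C ((((ℓ-b).choose k : ℝ) * q^k * (1-q)^(ℓ-b-k))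
          * ((b.choose (b-l) : ℝ) * (1 - q/((κ:ℝ)-1))^(b-l) * (q/((κ:ℝ)-1))^(b-(b-l))))
        * X^(k + (b - l)) := by
    rw [mul_mul_mul_comm, ← C_mul, ← pow_add]
    norm_num
  rw [hrw, coeff_C_mul, coeff_X_pow]
  have hcond : (c = k + (b - l)) ↔ ((k:ℤ) - (l:ℤ) = (c:ℤ) - (b:ℤ)) := by omega
  by_cases h : c = k + (b - l)
  · rw [if_pos h, if_pos (hcond.mp h), mul_one, Nat.choose_symm hl', Nat.sub_sub_self hl']
    ring
  · rw [if_neg h, if_neg (fun hh => h (hcond.mpr hh)), mul_zero]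

/-- Key mutation lumping identity. -/
lemma mut_fiber {κ ℓ : ℕ} (hκ : 2 ≤ κ) (q : ℝ) (u w : Fin ℓ → Fin κ) (c : ℕ) :
    (∑ v ∈ univ.filter (fun v : Fin ℓ → Fin κ => hammingDist v w = c), mutM κ q u v)
      = MH κ ℓ q (hammingDist u w) c := by
  have h1 : (∑ v : Fin ℓ → Fin κ, C (mutM κ q u v) * X ^ hammingDist v w).coeff c
      = ∑ v ∈ univ.filter (fun v : Fin ℓ → Fin κ => hammingDist v w = c), mutM κ q u v := by
    rw [finset_sum_coeff, Finset.sum_filter]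
    refine Finset.sum_congr rfl fun v _ => ?_
    rw [coeff_C_mul, coeff_X_pow]
    by_cases h : hammingDist v w = c
    · rw [if_pos h, if_pos h.symm, mul_one]
    · rw [if_neg h, if_neg (fun hh => h hh.symm), mul_zero]
  rw [← h1, poly_eq hκ q u w, coeff_eq_MH]

/-- Selection lumping identity. -/
lemma sel_fiber {κ ℓ m : ℕ} (σ : ℝ) (w : Fin ℓ → Fin κ) (d : Fin m → ℕ)
    (x : Fin m → Fin ℓ → Fin κ) (hx : ∀ i, hammingDist (x i) w = d i) (k : ℕ) :
    (∑ u ∈ univ.filter (fun u : Fin ℓ → Fin κ => hammingDist u w = k), selF σ w u x)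
      = FH σ k d := by
  have hden : (∑ i, fitness σ w (x i)) = ∑ i, AH σ (d i) := by
    refine Finset.sum_congr rfl fun i _ => ?_
    rw [fitness, AH, ← hx i]
    by_cases h : x i = w
    · rw [if_pos h, if_pos (by rw [h]; simp)]
    · rw [if_neg h, if_neg (by rwa [hammingDist_eq_zero])]
  have hfit : ∀ u ∈ univ.filter (fun u : Fin ℓ → Fin κ => hammingDist u w = k),
      fitness σ w u = AH σ k := by
    intro u hu
    rw [Finset.mem_filter] at hu
    rw [fitness, AH]
    by_cases h : u = w
    · rw [if_pos h, if_pos (by rw [← hu.2, h]; simp)]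
    · have hk0 : k ≠ 0 := fun hk0 => h (hammingDist_eq_zero.mp (hu.2.trans hk0))
      rw [if_neg h, if_neg hk0]
  have hn : (∑ u ∈ univ.filter (fun u : Fin ℓ → Fin κ => hammingDist u w = k),
      (univ.filter fun i => x i = u).card)
      = (univ.filter fun i => d i = k).card := by
    rw [Finset.card_filter,
      Finset.sum_congr rfl fun u _ => Finset.card_filter (fun i => x i = u) univ,
      Finset.sum_comm]
    refine Finset.sum_congr rfl fun i _ => ?_
    rw [Finset.sum_ite_eq (univ.filter (fun u : Fin ℓ → Fin κ => hammingDist u w = k)) (x i)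
      (fun _ => (1:ℕ))]
    simp only [Finset.mem_filter, Finset.mem_univ, true_and, hx i]
  have hcnt : (∑ u ∈ univ.filter (fun u : Fin ℓ → Fin κ => hammingDist u w = k),
      ((univ.filter fun i => x i = u).card : ℝ))
      = ((univ.filter fun i => d i = k).card : ℝ) := by
    rw [← hn]
    push_cast
    rfl
  unfold selF FH
  rw [← Finset.sum_div]
  rw [hden]
  congr 1
  rw [← hcnt, Finset.mul_sum]
  exact Finset.sum_congr rfl fun u hu => by rw [hfit u hu]

/-- Per-individual lumping. -/
lemma component_lump {κ ℓ m : ℕ} (hκ : 2 ≤ κ) (q σ : ℝ) (w : Fin ℓ → Fin κ)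
    (d : Fin m → ℕ) (x : Fin m → Fin ℓ → Fin κ) (hx : ∀ i, hammingDist (x i) w = d i)
    (c : ℕ) :
    (∑ v ∈ univ.filter (fun v : Fin ℓ → Fin κ => hammingDist v w = c),
        ∑ u, selF σ w u x * mutM κ q u v)
      = ∑ k ∈ range (ℓ + 1), FH σ k d * MH κ ℓ q k c := by
  rw [Finset.sum_comm]
  have h1 : ∀ u : Fin ℓ → Fin κ,
      (∑ v ∈ univ.filter (fun v : Fin ℓ → Fin κ => hammingDist v w = c),
        selF σ w u x * mutM κ q u v)
      = selF σ w u x * MH κ ℓ q (hammingDist u w) c := by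
    intro u
    rw [← Finset.mul_sum, mut_fiber hκ q u w c]
  rw [Finset.sum_congr rfl fun u _ => h1 u]
  rw [← Finset.sum_fiberwise_of_maps_to (g := fun u : Fin ℓ → Fin κ => hammingDist u w)
    (t := range (ℓ + 1))
    (fun u _ => Finset.mem_range.mpr (Nat.lt_succ_of_le
      (le_trans hammingDist_le_card_fintype (by simp))))]
  refine Finset.sum_congr rfl fun k hk => ?_
  have h2 : ∀ u ∈ univ.filter (fun u : Fin ℓ → Fin κ => hammingDist u w = k),
      selF σ w u x * MH κ ℓ q (hammingDist u w) c = selF σ w u x * MH κ ℓ q k c := by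
    intro u hu
    rw [Finset.mem_filter] at hu
    rw [hu.2]
  rw [Finset.sum_congr rfl h2, ← Finset.sum_mul, sel_fiber σ w d x hx k]

/-- The fibre sum equals `pH`. -/
lemma fiber_sum_eq {κ ℓ m : ℕ} (hκ : 2 ≤ κ) (q σ : ℝ) (w : Fin ℓ → Fin κ)
    (d e : Fin m → ℕ) (x : Fin m → Fin ℓ → Fin κ)
    (hx : ∀ i, hammingDist (x i) w = d i) :
    (∑ z ∈ univ.filter (fun z : Fin m → Fin ℓ → Fin κ =>
        ∀ i, hammingDist (z i) w = e i), wfP κ q σ w x z) = pH κ ℓ q σ d e := by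
  have hfib : univ.filter (fun z : Fin m → Fin ℓ → Fin κ => ∀ i, hammingDist (z i) w = e i)
      = Fintype.piFinset (fun i => univ.filter
          (fun v : Fin ℓ → Fin κ => hammingDist v w = e i)) := by
    ext z
    simp [Fintype.mem_piFinset]
  rw [hfib]
  unfold wfP pH
  rw [← Finset.prod_univ_sum
    (fun i => univ.filter (fun v : Fin ℓ → Fin κ => hammingDist v w = e i))
    (fun i v => ∑ u, selF σ w u x * mutM κ q u v)]
  exact Finset.prod_congr rfl fun i _ => component_lump hκ q σ w d x hx (e i)

end WFLump

/-- ℍ-lumpability of the Wright–Fisher model: for a population `x` with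
`ℍ(x) = d`, the total transition probability into the fibre `{z : ℍ(z) = e}`
equals `p_H(d,e)`; in particular it only depends on `x` through `ℍ(x)`. -/
theorem wfP_H_lumpable (κ ℓ m : ℕ) (hκ : 2 ≤ κ) (hℓ : 1 ≤ ℓ) (hm : 1 ≤ m)
    (q σ : ℝ) (hq0 : 0 < q) (hq1 : q < 1 - 1 / κ) (hσ : 1 < σ)
    (w : Fin ℓ → Fin κ) (d e : Fin m → ℕ)
    (hd : ∀ i, d i ≤ ℓ) (he : ∀ i, e i ≤ ℓ)
    (x : Fin m → Fin ℓ → Fin κ) (hx : ∀ i, hammingDist (x i) w = d i) :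
    (∑ z ∈ univ.filter (fun z : Fin m → Fin ℓ → Fin κ =>
        ∀ i, hammingDist (z i) w = e i), wfP κ q σ w x z) = pH κ ℓ q σ d e ∧
    ∀ y : Fin m → Fin ℓ → Fin κ, (∀ i, hammingDist (y i) w = d i) →
      (∑ z ∈ univ.filter (fun z : Fin m → Fin ℓ → Fin κ =>
          ∀ i, hammingDist (z i) w = e i), wfP κ q σ w x z) =
        ∑ z ∈ univ.filter (fun z : Fin m → Fin ℓ → Fin κ =>
          ∀ i, hammingDist (z i) w = e i), wfP κ q σ w y z := by
  refine ⟨WFLump.fiber_sum_eq hκ q σ w d e x hx, fun y hy => ?_⟩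
  rw [WFLump.fiber_sum_eq hκ q σ w d e x hx, WFLump.fiber_sum_eq hκ q σ w d e y hy]
end

section
/- In the neutral case σ = 1, the coupling map Ψ_H is non-decreasing with respect to the componentwise order on distances: for all d, e ∈ {0,…,ℓ}^m with d(i) ≤ e(i) for every i ∈ {1,…,m}, and every r ∈ ℛ, one has Ψ_H(d,r)(i) ≤ Ψ_H(e,r)(i) for every i ∈ {1,…,m}. -/
open Finset

/-- Mutation coupling map `ℳ_H(b, u₁,…,u_ℓ)`. -/
noncomputable def McoupH (κ ℓ : ℕ) (q : ℝ) (b : ℕ) (u : Fin ℓ → ℝ) : ℕ :=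
  b - (univ.filter fun k : Fin ℓ => (k : ℕ) < b ∧ u k < q / ((κ : ℝ) - 1)).card
    + (univ.filter fun k : Fin ℓ => b ≤ (k : ℕ) ∧ 1 - q < u k).card

/-- Neutral selection map: for `s ∈ [0,1)`, the unique (0-indexed) `i` with
`i/m ≤ s < (i+1)/m`, i.e. `⌊m·s⌋`. -/
noncomputable def SHneutral (m : ℕ) [NeZero m] (s : ℝ) : Fin m :=
  ⟨min (⌊(m : ℝ) * s⌋).toNat (m - 1), by
    have := Nat.pos_of_ne_zero (NeZero.ne m); omega⟩

/-- Coupling map `Ψ_H` of the distance process in the neutral case `σ = 1`.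
The random input `r` is a matrix in `ℛ = [0,1)^{m×(ℓ+1)}`: column `0` drives the
selection, columns `1,…,ℓ` drive the mutations. -/
noncomputable def PsiH (κ ℓ m : ℕ) [NeZero m] (q : ℝ)
    (d : Fin m → ℕ) (r : Fin m → Fin (ℓ + 1) → ℝ) : Fin m → ℕ :=
  fun i => McoupH κ ℓ q (d (SHneutral m (r i 0))) (fun j => r i j.succ)

/-!
In the neutral case the selected parent `⌊m · r i 0⌋` depends on `r` alone, so
`Ψ_H(d, r) i` and `Ψ_H(e, r) i` apply the same mutation map `ℳ_H(·, u)` to `d j ≤ e j`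
for one and the same `j`; it suffices that `ℳ_H(·, u)` is monotone. Passing from `b` to
`b + 1` adds one, moves site `b` out of the count of possible forward mutations
(`u_b > 1 - q`) and into the count of possible back mutations (`u_b < q/(κ-1)`).
Since `q/(κ-1) < 1 - q`, at most one of these two counts changes, so `ℳ_H` drops by at
most one while `b` gains one.
-/

section
variable {ℓ : ℕ} (P Q : Fin ℓ → Prop) [DecidablePred P] [DecidablePred Q]

theorem card_filter_val_lt_and_le (b : ℕ) : #{k : Fin ℓ | (k : ℕ) < b ∧ P k} ≤ b :=
  calc #{k : Fin ℓ | (k : ℕ) < b ∧ P k}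
      ≤ #{k : Fin ℓ | (k : ℕ) < b} :=
        card_le_card <| monotone_filter_right _ fun _ _ h => h.1
    _ = min ℓ b := Fin.card_filter_val_lt
    _ ≤ b := min_le_right _ _

theorem card_filter_lt_succ_add_card_filter_le_le (hPQ : ∀ k, P k → ¬Q k) (b : ℕ) :
    #{k : Fin ℓ | (k : ℕ) < b + 1 ∧ P k} + #{k : Fin ℓ | b ≤ (k : ℕ) ∧ Q k}
      ≤ #{k : Fin ℓ | (k : ℕ) < b ∧ P k} + #{k : Fin ℓ | b + 1 ≤ (k : ℕ) ∧ Q k} + 1 := by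
  have hdisj : Disjoint (univ.filter fun k : Fin ℓ => (k : ℕ) < b + 1 ∧ P k)
      (univ.filter fun k : Fin ℓ => b ≤ (k : ℕ) ∧ Q k) :=
    disjoint_filter.mpr fun k _ hP hQ => hPQ k hP.2 hQ.2
  have hsub : (univ.filter fun k : Fin ℓ => (k : ℕ) < b + 1 ∧ P k)
        ∪ univ.filter (fun k : Fin ℓ => b ≤ (k : ℕ) ∧ Q k)
      ⊆ ((univ.filter fun k : Fin ℓ => (k : ℕ) < b ∧ P k)
        ∪ univ.filter (fun k : Fin ℓ => b + 1 ≤ (k : ℕ) ∧ Q k))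
        ∪ univ.filter (fun k : Fin ℓ => (k : ℕ) = b) := by
    intro k
    simp only [mem_union, mem_filter, mem_univ, true_and]
    by_cases hkb : (k : ℕ) = b
    · exact fun _ => .inr hkb
    · rintro (⟨hk, hP⟩ | ⟨hk, hQ⟩)
      · exact .inl (.inl ⟨by omega, hP⟩)
      · exact .inl (.inr ⟨by omega, hQ⟩)
  have hb : #{k : Fin ℓ | (k : ℕ) = b} ≤ 1 :=
    card_le_one.mpr fun k hk k' hk' => Fin.ext <| by simp_all
  rw [← card_union_of_disjoint hdisj]
  calc _ ≤ _ := card_le_card hsub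
    _ ≤ _ := card_union_le _ _
    _ ≤ _ := add_le_add (card_union_le _ _) hb

theorem monotone_sub_card_filter_add_card_filter (hPQ : ∀ k, P k → ¬Q k) :
    Monotone fun b =>
      b - #{k : Fin ℓ | (k : ℕ) < b ∧ P k} + #{k : Fin ℓ | b ≤ (k : ℕ) ∧ Q k} :=
  monotone_nat_of_le_succ fun b => by
    have := card_filter_lt_succ_add_card_filter_le_le P Q hPQ b
    have := card_filter_val_lt_and_le P b
    omega

end

theorem div_sub_one_lt_one_sub {κ q : ℝ} (hκ : 1 < κ) (hq : q < 1 - 1 / κ) :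
    q / (κ - 1) < 1 - q := by
  have hqκ : q * κ < κ - 1 := by
    have := mul_lt_mul_of_pos_right hq (by linarith : 0 < κ)
    rwa [sub_mul, one_div_mul_cancel (by positivity), one_mul] at this
  rw [div_lt_iff₀ (by linarith)]
  linarith

theorem McoupH_monotone (κ ℓ : ℕ) (q : ℝ) (hq : q / ((κ : ℝ) - 1) < 1 - q) (u : Fin ℓ → ℝ) :
    Monotone fun b => McoupH κ ℓ q b u :=
  monotone_sub_card_filter_add_card_filter _ _ fun _ hP hQ =>
    lt_irrefl _ ((hP.trans hq).trans hQ)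

theorem PsiH_monotone_general (κ ℓ m : ℕ) (hκ : 2 ≤ κ) [NeZero m]
    (q : ℝ) (hq1 : q < 1 - 1 / κ)
    (d e : Fin m → ℕ) (hde : ∀ i, d i ≤ e i)
    (r : Fin m → Fin (ℓ + 1) → ℝ) :
    ∀ i, PsiH κ ℓ m q d r i ≤ PsiH κ ℓ m q e r i := by
  have hκ' : (1 : ℝ) < κ := by exact_mod_cast hκ
  exact fun i => McoupH_monotone κ ℓ q (div_sub_one_lt_one_sub hκ' hq1) _ (hde _)

/-- In the neutral case `σ = 1`, the coupling map `Ψ_H` is non-decreasing with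
respect to the componentwise order on distances. -/
theorem PsiH_monotone (κ ℓ m : ℕ) (hκ : 2 ≤ κ) (hℓ : 1 ≤ ℓ) [NeZero m]
    (q : ℝ) (hq0 : 0 < q) (hq1 : q < 1 - 1 / κ)
    (d e : Fin m → ℕ) (hd : ∀ i, d i ≤ ℓ) (he : ∀ i, e i ≤ ℓ)
    (hde : ∀ i, d i ≤ e i)
    (r : Fin m → Fin (ℓ + 1) → ℝ) (hr : ∀ i j, 0 ≤ r i j ∧ r i j < 1) :
    ∀ i, PsiH κ ℓ m q d r i ≤ PsiH κ ℓ m q e r i :=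
  PsiH_monotone_general κ ℓ m hκ q hq1 d e hde r
end

section
/- In the neutral case σ = 1, the distance process preserves positive correlations: if μ is a probability measure on {0,…,ℓ}^m having positive correlations, then for every n ≥ 0 the probability measure μ·(p_H)^n, defined by e ↦ Σ_d μ(d)·(p_H)^n(d,e) where (p_H)^n is the n-th matrix power of the lumped transition matrix, also has positive correlations. -/
open Finset

/-- Neutral lumped transition matrix `p_H` on `{0,…,ℓ}^m` (case `σ = 1`). -/
noncomputable def pHneutral (κ ℓ m : ℕ) (q : ℝ)
    (d e : Fin m → Fin (ℓ + 1)) : ℝ :=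
  ∏ i, ∑ k ∈ range (ℓ + 1),
    ((univ.filter fun i' => (d i' : ℕ) = k).card / (m : ℝ)) * MH κ ℓ q k (e i)

/-- `n`-th matrix power of the neutral lumped transition matrix. -/
noncomputable def pHneutraln (κ ℓ m : ℕ) (q : ℝ) :
    ℕ → (Fin m → Fin (ℓ + 1)) → (Fin m → Fin (ℓ + 1)) → ℝ
  | 0 => fun d e => if d = e then 1 else 0
  | n + 1 => fun d e => ∑ c, pHneutraln κ ℓ m q n d c * pHneutral κ ℓ m q c e

/-- A probability vector `μ` on `{0,…,ℓ}^m` has positive correlations if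
`Σ fg dμ ≥ (Σ f dμ)(Σ g dμ)` for all non-decreasing `f, g`. -/
def PosCorr {ℓ m : ℕ} (μ : (Fin m → Fin (ℓ + 1)) → ℝ) : Prop :=
  ∀ f g : (Fin m → Fin (ℓ + 1)) → ℝ, Monotone f → Monotone g →
    (∑ d, f d * μ d) * (∑ d, g d * μ d) ≤ ∑ d, f d * g d * μ d

/-!
A row `p_H(d, ·)` of the neutral kernel is a product measure: its coordinates are i.i.d. with law
`ν_d = (1/m) Σ_i M_H(d(i), ·)`. Product measures on the distributive lattice `{0,…,ℓ}^m` are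
log-modular, so by the FKG inequality every row has positive correlations.

The row `M_H(b, ·)` is the law of `b + K - L` with independent `K ~ Bin(ℓ - b, q)` and
`L ~ Bin(b, q/(κ-1))`. Passing from `b` to `b + 1` changes the contribution of a single site from
`+1` with probability `q` to `+1` with probability `1 - q/(κ-1) ≥ q`, so `M_H(b, ·)`, hence `ν_d`
and the product measure `p_H(d, ·)`, increase stochastically with `d`.

For such a monotone kernel `P` whose rows have positive correlations,
`(μ Pf)(μ Pg) ≤ μ(Pf · Pg) ≤ μ P(fg)`: the first step is positive correlation of `μ` applied to
the monotone functions `Pf`, `Pg`, the second is positive correlation of the rows. Iterate.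
-/

theorem fkg_real {α : Type*} [DistribLattice α] [Fintype α] (μ f g : α → ℝ) (hμ₀ : 0 ≤ μ)
    (hf : Monotone f) (hg : Monotone g) (hμ : ∀ a b, μ a * μ b ≤ μ (a ⊓ b) * μ (a ⊔ b)) :
    (∑ a, μ a * f a) * ∑ a, μ a * g a ≤ (∑ a, μ a) * ∑ a, μ a * (f a * g a) := by
  have add_sum_abs_nonneg (φ : α → ℝ) (a : α) : 0 ≤ φ a + ∑ b, |φ b| := by
    have := single_le_sum (fun b _ => abs_nonneg (φ b)) (mem_univ a)
    linarith [neg_abs_le (φ a)]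
  -- Shifting `f` and `g` by constants changes both sides by the same amount.
  set s := ∑ a, |f a|
  set t := ∑ a, |g a|
  have key := fkg (fun a => f a + s) (fun a => g a + t) μ hμ₀ (add_sum_abs_nonneg f)
    (add_sum_abs_nonneg g) (hf.add_const s) (hg.add_const t) hμ
  have expand (φ : α → ℝ) (c : ℝ) : ∑ a, μ a * (φ a + c) = ∑ a, μ a * φ a + c * ∑ a, μ a := by
    simp only [mul_add, sum_add_distrib, ← sum_mul, mul_comm c]
  have expand₂ : ∑ a, μ a * ((f a + s) * (g a + t)) = ∑ a, μ a * (f a * g a) +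
      t * ∑ a, μ a * f a + s * ∑ a, μ a * g a + s * t * ∑ a, μ a := by
    simp only [mul_sum, ← sum_add_distrib]
    exact sum_congr rfl fun a _ => by ring
  rw [expand, expand, expand₂] at key
  linarith

theorem fkg_pi {ι X : Type*} [Fintype ι] [DecidableEq ι] [Fintype X] [LinearOrder X]
    (r : ι → X → ℝ) (hr : ∀ i x, 0 ≤ r i x) {f g : (ι → X) → ℝ} (hf : Monotone f)
    (hg : Monotone g) :
    (∑ e, (∏ i, r i (e i)) * f e) * ∑ e, (∏ i, r i (e i)) * g e ≤
      (∑ e : ι → X, ∏ i, r i (e i)) * ∑ e, (∏ i, r i (e i)) * (f e * g e) :=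
  fkg_real _ f g (fun e => prod_nonneg fun i _ => hr i (e i)) hf hg fun a b => by
    rw [← prod_mul_distrib, ← prod_mul_distrib]
    refine le_of_eq (prod_congr rfl fun i _ => ?_)
    rcases le_total (a i) (b i) with h | h <;> simp [h, mul_comm]

def StochDominated {α : Type*} [Fintype α] [Preorder α] (ν ν' : α → ℝ) : Prop :=
  ∀ h : α → ℝ, Monotone h → ∑ x, h x * ν x ≤ ∑ x, h x * ν' x

theorem sum_fin_succ_pi_mul_prod {X : Type*} [Fintype X] {m : ℕ} (r : Fin (m + 1) → X → ℝ)
    (f : (Fin (m + 1) → X) → ℝ) :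
    ∑ e, f e * ∏ i, r i (e i) =
      ∑ x, (∑ t : Fin m → X, f (Fin.cons x t) * ∏ i, r i.succ (t i)) * r 0 x := by
  rw [← (Fin.consEquiv fun _ => X).sum_comp, Fintype.sum_prod_type]
  refine sum_congr rfl fun x _ => ?_
  rw [sum_mul]
  refine sum_congr rfl fun t _ => ?_
  simp only [Fin.consEquiv, Equiv.coe_fn_mk, Fin.prod_univ_succ, Fin.cons_zero, Fin.cons_succ]
  ring

theorem StochDominated.pi {X : Type*} [Fintype X] [Preorder X] :
    ∀ {m : ℕ} {r r' : Fin m → X → ℝ}, (∀ i x, 0 ≤ r i x) → (∀ i x, 0 ≤ r' i x) →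
      (∀ i, StochDominated (r i) (r' i)) →
      StochDominated (fun e : Fin m → X => ∏ i, r i (e i)) (fun e => ∏ i, r' i (e i))
  | 0, _, _, _, _, _ => fun h _ => by simp
  | m + 1, r, r', hr, hr', hdom => fun f hf => by
    rw [sum_fin_succ_pi_mul_prod, sum_fin_succ_pi_mul_prod]
    set F' := fun x : X => ∑ t : Fin m → X, f (Fin.cons x t) * ∏ i, r' i.succ (t i)
    have hF' : Monotone F' := fun x y hxy => sum_le_sum fun t _ =>
      mul_le_mul_of_nonneg_right (hf (Fin.cons_le_cons.2 ⟨hxy, le_rfl⟩))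
        (prod_nonneg fun i _ => hr' _ _)
    calc _ ≤ ∑ x, F' x * r 0 x := sum_le_sum fun x _ => mul_le_mul_of_nonneg_right
            (StochDominated.pi (fun i => hr i.succ) (fun i => hr' i.succ) (fun i => hdom i.succ)
              _ fun s t hst => hf (Fin.cons_le_cons.2 ⟨le_rfl, hst⟩)) (hr 0 x)
      _ ≤ _ := hdom 0 F' hF'

noncomputable def binomialExpectation (p : ℝ) (n : ℕ) (φ : ℕ → ℝ) : ℝ :=
  ∑ k ∈ range (n + 1), n.choose k * p ^ k * (1 - p) ^ (n - k) * φ k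

@[simp]
theorem binomialExpectation_const (p : ℝ) (n : ℕ) (a : ℝ) :
    binomialExpectation p n (fun _ => a) = a := by
  have total : ∑ k ∈ range (n + 1), (n.choose k : ℝ) * p ^ k * (1 - p) ^ (n - k) = 1 :=
    calc _ = (p + (1 - p)) ^ n := by rw [add_pow]; exact sum_congr rfl fun k _ => by ring
      _ = 1 := by simp
  rw [binomialExpectation, ← sum_mul, total, one_mul]

theorem binomialExpectation_mul_add_mul (p : ℝ) (n : ℕ) (a b : ℝ) (φ ψ : ℕ → ℝ) :
    binomialExpectation p n (fun k => a * φ k + b * ψ k) =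
      a * binomialExpectation p n φ + b * binomialExpectation p n ψ := by
  simp only [binomialExpectation, mul_sum, ← sum_add_distrib]
  exact sum_congr rfl fun k _ => by ring

theorem binomialExpectation_mono {p : ℝ} {n : ℕ} (hp₀ : 0 ≤ p) (hp₁ : p ≤ 1) {φ ψ : ℕ → ℝ}
    (h : ∀ k, φ k ≤ ψ k) : binomialExpectation p n φ ≤ binomialExpectation p n ψ := by
  have : 0 ≤ 1 - p := by linarith
  exact sum_le_sum fun k _ => mul_le_mul_of_nonneg_left (h k) (by positivity)

theorem binomialExpectation_succ (p : ℝ) (n : ℕ) (φ : ℕ → ℝ) :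
    binomialExpectation p (n + 1) φ =
      binomialExpectation p n (fun k => (1 - p) * φ k + p * φ (k + 1)) := by
  have last_trial_success : ∑ k ∈ range (n + 1),
      (n.choose k : ℝ) * p ^ (k + 1) * (1 - p) ^ (n - k) * φ (k + 1) =
        p * binomialExpectation p n (fun k => φ (k + 1)) := by
    rw [binomialExpectation, mul_sum]
    exact sum_congr rfl fun k _ => by ring
  have last_trial_failure : ∑ k ∈ range (n + 1),
      (n.choose (k + 1) : ℝ) * p ^ (k + 1) * (1 - p) ^ (n - k) * φ (k + 1) +
        (1 - p) ^ (n + 1) * φ 0 =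
        (1 - p) * binomialExpectation p n φ := by
    conv_lhs => rw [sum_range_succ]
    rw [binomialExpectation, sum_range_succ', mul_add, mul_sum]
    simp only [Nat.choose_succ_self, Nat.cast_zero, zero_mul, add_zero]
    congr 1
    · refine sum_congr rfl fun k hk => ?_
      rw [show n - k = n - (k + 1) + 1 by have := mem_range.1 hk; omega]
      ring
    · simp only [Nat.choose_zero_right, Nat.cast_one, pow_zero, mul_one, tsub_zero, one_mul]
      ring
  rw [binomialExpectation_mul_add_mul, binomialExpectation, sum_range_succ', ← last_trial_success,
    ← last_trial_failure]
  simp only [Nat.choose_succ_succ', Nat.add_sub_add_right, Nat.cast_add, add_mul, sum_add_distrib,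
    Nat.choose_zero_right, Nat.cast_one, pow_zero, mul_one, tsub_zero, one_mul]
  ring

section MH
variable {κ ℓ : ℕ} {q : ℝ}

theorem sum_mul_MH {b : ℕ} (hb : b ≤ ℓ) (h : ℕ → ℝ) :
    ∑ c ∈ range (ℓ + 1), h c * MH κ ℓ q b c =
      binomialExpectation q (ℓ - b) fun k =>
        binomialExpectation (q / ((κ : ℝ) - 1)) b fun l => h (b + k - l) := by
  simp only [MH, binomialExpectation, mul_sum]
  rw [sum_comm]
  refine sum_congr rfl fun k hk => ?_
  rw [sum_comm]
  refine sum_congr rfl fun l hl => ?_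
  have hk := mem_range.1 hk
  have hl := mem_range.1 hl
  rw [sum_eq_single_of_mem (b + k - l) (mem_range.2 (by omega)) fun c _ hc => by
    rw [if_neg (by omega), mul_zero], if_pos (by omega)]
  ring

theorem MH_nonneg (hq : 0 ≤ q) (hq' : 0 ≤ q / ((κ : ℝ) - 1))
    (hqq' : q + q / ((κ : ℝ) - 1) ≤ 1) (b c : ℕ) : 0 ≤ MH κ ℓ q b c := by
  have : 0 ≤ 1 - q := by linarith
  have : 0 ≤ 1 - q / ((κ : ℝ) - 1) := by linarith
  refine sum_nonneg fun k _ => sum_nonneg fun l _ => ?_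
  split_ifs <;> positivity

theorem sum_MH {b : ℕ} (hb : b ≤ ℓ) : ∑ c ∈ range (ℓ + 1), MH κ ℓ q b c = 1 := by
  simpa using sum_mul_MH (κ := κ) (q := q) hb fun _ => 1

theorem sum_mul_MH_le_succ (hq : 0 ≤ q) (hq' : 0 ≤ q / ((κ : ℝ) - 1))
    (hqq' : q + q / ((κ : ℝ) - 1) ≤ 1) {b : ℕ} (hb : b < ℓ) {h : ℕ → ℝ} (hh : Monotone h) :
    ∑ c ∈ range (ℓ + 1), h c * MH κ ℓ q b c ≤ ∑ c ∈ range (ℓ + 1), h c * MH κ ℓ q (b + 1) c := by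
  obtain ⟨n, hn⟩ : ∃ n, ℓ - b = n + 1 := ⟨ℓ - b - 1, by omega⟩
  rw [sum_mul_MH hb.le, sum_mul_MH hb, hn, show ℓ - (b + 1) = n by omega,
    binomialExpectation_succ]
  refine binomialExpectation_mono hq (by linarith) fun k => ?_
  rw [binomialExpectation_succ, ← binomialExpectation_mul_add_mul]
  refine binomialExpectation_mono hq' (by linarith) fun l => ?_
  rw [show b + 1 + k - (l + 1) = b + k - l by omega, show b + (k + 1) - l = b + 1 + k - l by omega]
  have := hh (show b + k - l ≤ b + 1 + k - l by omega)
  nlinarith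

theorem MH_stochDominated (hq : 0 ≤ q) (hq' : 0 ≤ q / ((κ : ℝ) - 1))
    (hqq' : q + q / ((κ : ℝ) - 1) ≤ 1) {a b : Fin (ℓ + 1)} (hab : a ≤ b) :
    StochDominated (fun c : Fin (ℓ + 1) => MH κ ℓ q a c) (fun c => MH κ ℓ q b c) := by
  intro h hh
  have hH : Monotone fun c => h (Fin.clamp c ℓ) := hh.comp Fin.clamp_monotone
  have sum_eq (b : Fin (ℓ + 1)) : ∑ c, h c * MH κ ℓ q b c =
      ∑ c ∈ range (ℓ + 1), h (Fin.clamp c ℓ) * MH κ ℓ q b c := by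
    rw [← Fin.sum_univ_eq_sum_range]
    refine sum_congr rfl fun c _ => ?_
    rw [show Fin.clamp c ℓ = c from Fin.ext (by simp [Fin.coe_clamp, Nat.le_of_lt_succ c.2])]
  have hmono : Monotone fun b : Fin (ℓ + 1) =>
      ∑ c ∈ range (ℓ + 1), h (Fin.clamp c ℓ) * MH κ ℓ q b c :=
    Fin.monotone_iff_le_succ.2 fun i => by simpa using sum_mul_MH_le_succ hq hq' hqq' i.2 hH
  rw [sum_eq, sum_eq]
  exact hmono hab

end MH

section Kernel
open Matrix
variable {ℓ m : ℕ}

theorem posCorr_pi {ν : Fin m → Fin (ℓ + 1) → ℝ} (hν₀ : ∀ i x, 0 ≤ ν i x)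
    (hν₁ : ∀ i, ∑ x, ν i x = 1) : PosCorr fun e => ∏ i, ν i (e i) := by
  intro f g hf hg
  have h := fkg_pi ν hν₀ hf hg
  rw [← Fintype.prod_sum, prod_eq_one fun i _ => hν₁ i, one_mul] at h
  simpa only [mul_comm, mul_left_comm] using h

theorem PosCorr.vecMul {μ : (Fin m → Fin (ℓ + 1)) → ℝ}
    {P : Matrix (Fin m → Fin (ℓ + 1)) (Fin m → Fin (ℓ + 1)) ℝ} (hμ₀ : ∀ d, 0 ≤ μ d)
    (hμ : PosCorr μ) (hP_mono : ∀ ⦃d d'⦄, d ≤ d' → StochDominated (P d) (P d'))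
    (hP_row : ∀ d, PosCorr (P d)) : PosCorr (μ ᵥ* P) := by
  intro f g hf hg
  have sum_mul_vecMul (φ : (Fin m → Fin (ℓ + 1)) → ℝ) :
      ∑ e, φ e * (μ ᵥ* P) e = ∑ d, (∑ e, φ e * P d e) * μ d := by
    simp only [Matrix.vecMul, dotProduct, mul_sum, sum_mul]
    rw [sum_comm]
    exact sum_congr rfl fun d _ => sum_congr rfl fun e _ => by ring
  have mono {φ : (Fin m → Fin (ℓ + 1)) → ℝ} (hφ : Monotone φ) :
      Monotone fun d => ∑ e, φ e * P d e := fun d d' h => hP_mono h φ hφ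
  rw [sum_mul_vecMul, sum_mul_vecMul, sum_mul_vecMul fun e => f e * g e]
  calc _ ≤ ∑ d, (∑ e, f e * P d e) * (∑ e, g e * P d e) * μ d := hμ _ _ (mono hf) (mono hg)
    _ ≤ _ := sum_le_sum fun d _ => mul_le_mul_of_nonneg_right (hP_row d f g hf hg) (hμ₀ d)

theorem PosCorr.vecMul_pow {μ : (Fin m → Fin (ℓ + 1)) → ℝ}
    {P : Matrix (Fin m → Fin (ℓ + 1)) (Fin m → Fin (ℓ + 1)) ℝ} (hμ₀ : ∀ d, 0 ≤ μ d)
    (hμ : PosCorr μ) (hP₀ : ∀ d e, 0 ≤ P d e)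
    (hP_mono : ∀ ⦃d d'⦄, d ≤ d' → StochDominated (P d) (P d'))
    (hP_row : ∀ d, PosCorr (P d)) (n : ℕ) : PosCorr (μ ᵥ* P ^ n) := by
  suffices ∀ n : ℕ, (∀ e, 0 ≤ (μ ᵥ* P ^ n) e) ∧ PosCorr (μ ᵥ* P ^ n) from (this n).2
  intro n
  induction n with
  | zero => simpa using ⟨hμ₀, hμ⟩
  | succ n ih =>
    rw [pow_succ, ← vecMul_vecMul]
    exact ⟨fun e => sum_nonneg fun d _ => mul_nonneg (ih.1 d) (hP₀ d e),
      ih.2.vecMul ih.1 hP_mono hP_row⟩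

end Kernel

noncomputable def siteLaw (κ ℓ m : ℕ) (q : ℝ) (d : Fin m → Fin (ℓ + 1)) (c : Fin (ℓ + 1)) :
    ℝ :=
  (∑ i, MH κ ℓ q (d i) c) / m

section pHneutral
variable {κ ℓ m : ℕ} {q : ℝ}

theorem pHneutral_eq_prod (d : Fin m → Fin (ℓ + 1)) :
    pHneutral κ ℓ m q d = fun e => ∏ i, siteLaw κ ℓ m q d (e i) := by
  ext e
  refine prod_congr rfl fun j _ => ?_
  rw [siteLaw, ← sum_fiberwise_of_maps_to (g := fun i => (d i : ℕ)) (t := range (ℓ + 1))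
    fun i _ => mem_range.2 (d i).2, sum_div]
  refine sum_congr rfl fun k _ => ?_
  rw [sum_congr rfl fun _ hi => by rw [(mem_filter.1 hi).2], sum_const, nsmul_eq_mul]
  ring

theorem pHneutraln_eq_pow (n : ℕ) :
    pHneutraln κ ℓ m q n = Matrix.of (pHneutral κ ℓ m q) ^ n := by
  induction n with
  | zero => ext d e; simp [pHneutraln, Matrix.one_apply]
  | succ n ih => ext d e; simp [pHneutraln, pow_succ, Matrix.mul_apply, ih]

theorem siteLaw_nonneg (hq : 0 ≤ q) (hq' : 0 ≤ q / ((κ : ℝ) - 1))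
    (hqq' : q + q / ((κ : ℝ) - 1) ≤ 1) (d : Fin m → Fin (ℓ + 1)) (c : Fin (ℓ + 1)) :
    0 ≤ siteLaw κ ℓ m q d c :=
  div_nonneg (sum_nonneg fun _ _ => MH_nonneg hq hq' hqq' _ _) m.cast_nonneg

theorem sum_siteLaw (hm : m ≠ 0) (d : Fin m → Fin (ℓ + 1)) : ∑ c, siteLaw κ ℓ m q d c = 1 := by
  have row_sum (i : Fin m) : ∑ c : Fin (ℓ + 1), MH κ ℓ q (d i) c = 1 := by
    rw [Fin.sum_univ_eq_sum_range (MH κ ℓ q (d i)), sum_MH (Nat.le_of_lt_succ (d i).2)]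
  simp only [siteLaw, ← sum_div]
  rw [sum_comm]
  simp [row_sum, hm]

theorem siteLaw_stochDominated (hq : 0 ≤ q) (hq' : 0 ≤ q / ((κ : ℝ) - 1))
    (hqq' : q + q / ((κ : ℝ) - 1) ≤ 1) {d d' : Fin m → Fin (ℓ + 1)} (hdd' : d ≤ d') :
    StochDominated (siteLaw κ ℓ m q d) (siteLaw κ ℓ m q d') := by
  intro h hh
  simp only [siteLaw, mul_div_assoc', ← sum_div, mul_sum]
  rw [sum_comm, sum_comm (s := univ) (t := univ) (f := fun c i => h c * MH κ ℓ q (d' i) c)]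
  exact div_le_div_of_nonneg_right
    (sum_le_sum fun i _ => MH_stochDominated hq hq' hqq' (hdd' i) h hh) m.cast_nonneg

theorem pHneutral_nonneg (hq : 0 ≤ q) (hq' : 0 ≤ q / ((κ : ℝ) - 1))
    (hqq' : q + q / ((κ : ℝ) - 1) ≤ 1) (d e : Fin m → Fin (ℓ + 1)) :
    0 ≤ pHneutral κ ℓ m q d e := by
  rw [pHneutral_eq_prod]
  exact prod_nonneg fun _ _ => siteLaw_nonneg hq hq' hqq' d _

theorem pHneutral_stochDominated (hq : 0 ≤ q) (hq' : 0 ≤ q / ((κ : ℝ) - 1))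
    (hqq' : q + q / ((κ : ℝ) - 1) ≤ 1) {d d' : Fin m → Fin (ℓ + 1)} (hdd' : d ≤ d') :
    StochDominated (pHneutral κ ℓ m q d) (pHneutral κ ℓ m q d') := by
  rw [pHneutral_eq_prod, pHneutral_eq_prod]
  exact .pi (fun _ => siteLaw_nonneg hq hq' hqq' d) (fun _ => siteLaw_nonneg hq hq' hqq' d')
    fun _ => siteLaw_stochDominated hq hq' hqq' hdd'

theorem posCorr_pHneutral (hq : 0 ≤ q) (hq' : 0 ≤ q / ((κ : ℝ) - 1))
    (hqq' : q + q / ((κ : ℝ) - 1) ≤ 1) (d : Fin m → Fin (ℓ + 1)) :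
    PosCorr (pHneutral κ ℓ m q d) := by
  rw [pHneutral_eq_prod]
  exact posCorr_pi (fun _ => siteLaw_nonneg hq hq' hqq' d) fun i => sum_siteLaw i.pos.ne' d

end pHneutral

theorem neutral_distance_preserves_posCorr_general (κ ℓ m : ℕ)
    (hκ : 2 ≤ κ)
    (q : ℝ) (hq0 : 0 < q) (hq1 : q < 1 - 1 / κ)
    (μ : (Fin m → Fin (ℓ + 1)) → ℝ) (hμ0 : ∀ d, 0 ≤ μ d)
    (hpos : PosCorr μ) :
    ∀ n : ℕ, PosCorr (fun e => ∑ d, μ d * pHneutraln κ ℓ m q n d e) := by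
  have hκ' : (2 : ℝ) ≤ κ := by exact_mod_cast hκ
  have hq' : 0 ≤ q / ((κ : ℝ) - 1) := div_nonneg hq0.le (by linarith)
  have hqq' : q + q / ((κ : ℝ) - 1) ≤ 1 := by
    have : q * κ < κ - 1 :=
      calc q * κ < (1 - 1 / κ) * κ := by gcongr
        _ = κ - 1 := by field_simp
    rw [← le_sub_iff_add_le', div_le_iff₀ (by linarith)]
    linarith
  intro n
  rw [pHneutraln_eq_pow]
  exact hpos.vecMul_pow hμ0 (pHneutral_nonneg hq0.le hq' hqq')
    (fun _ _ => pHneutral_stochDominated hq0.le hq' hqq') (posCorr_pHneutral hq0.le hq' hqq') n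

/-- In the neutral case `σ = 1`, the distance process preserves positive
correlations: if the initial law has positive correlations, so does the law at any
time `n`. -/
theorem neutral_distance_preserves_posCorr (κ ℓ m : ℕ)
    (hκ : 2 ≤ κ) (hℓ : 1 ≤ ℓ) (hm : 1 ≤ m)
    (q : ℝ) (hq0 : 0 < q) (hq1 : q < 1 - 1 / κ)
    (μ : (Fin m → Fin (ℓ + 1)) → ℝ) (hμ0 : ∀ d, 0 ≤ μ d) (hμ1 : ∑ d, μ d = 1)
    (hpos : PosCorr μ) :
    ∀ n : ℕ, PosCorr (fun e => ∑ d, μ d * pHneutraln κ ℓ m q n d e) :=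
  neutral_distance_preserves_posCorr_general κ ℓ m hκ q hq0 hq1 μ hμ0 hpos
end

section
/- (Characterization of the zeros of the cost function V.) Assume σ > 1, a > 0 and σe^{−a} > 1; write F(r) = e^{−a}·σr/((σ−1)r+1) and ρ* = (σe^{−a}−1)/(σ−1). Then for s, t ∈ [0,1], V(s,t) = 0 if and only if one of the following holds: (i) s = t = 0; (ii) t = F^l(s) for some integer l ≥ 1 (F^l the l-th iterate of F); (iii) s ≠ 0 and t = ρ*. -/
open ENNReal

/-- The selection map `f(r) = σr/((σ−1)r+1)`. -/
noncomputable def fsel (σ r : ℝ) : ℝ := σ * r / ((σ - 1) * r + 1)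

/-- The map `F(r) = e^{−a}·f(r)`. -/
noncomputable def Fmap (σ a r : ℝ) : ℝ := Real.exp (-a) * fsel σ r

/-- The binomial large deviation rate function `I(p,t)`, with value `+∞` for
`t ∉ [0,1]`, and with the degenerate conventions at `p = 0` and `p = 1`. -/
noncomputable def Irate (p t : ℝ) : ℝ≥0∞ :=
  if 0 ≤ t ∧ t ≤ 1 then
    if 0 < p ∧ p < 1 then
      ENNReal.ofReal (t * Real.log (t / p) + (1 - t) * Real.log ((1 - t) / (1 - p)))
    else if p ≤ 0 then (if t = 0 then 0 else ⊤)
    else (if t = 1 then 0 else ⊤)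
  else ⊤

/-- The one-step cost `ℐ(r,s,t) = I(f(r),s) + s·I(e^{−a}, t/s)`, with the
conventions `s·I(e^{−a},t/s) = 0` if `s = t = 0` and `= +∞` if `s = 0 < t`. -/
noncomputable def Icost (σ a r s t : ℝ) : ℝ≥0∞ :=
  Irate (fsel σ r) s +
    (if s = 0 then (if t = 0 then 0 else ⊤)
     else ENNReal.ofReal s * Irate (Real.exp (-a)) (t / s))

/-- The cost function `V(s,t)`: the infimum over `l ≥ 1` and paths
`ρ_0 = s, …, ρ_l = t`, `γ_0,…,γ_{l−1}` in `[0,1]` of `Σ_k ℐ(ρ_k,γ_k,ρ_{k+1})`. -/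
noncomputable def Vcost (σ a : ℝ) (s t : ℝ) : ℝ≥0∞ :=
  ⨅ (l : ℕ) (_ : 1 ≤ l) (ρ : ℕ → ℝ) (γ : ℕ → ℝ)
    (_ : ρ 0 = s) (_ : ρ l = t)
    (_ : ∀ k ≤ l, ρ k ∈ Set.Icc (0 : ℝ) 1) (_ : ∀ k < l, γ k ∈ Set.Icc (0 : ℝ) 1),
    ∑ k ∈ Finset.range l, Icost σ a (ρ k) (γ k) (ρ (k + 1))

/-!
In the coordinate `1 / x` the map `F` is an affine contraction with factor `e^a/σ < 1` and fixed
point `1 / ρ*`, so the orbit of every `s > 0` converges to `ρ*`. The one-step cost `ℐ(r, γ, t)`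
vanishes for `γ = f(r)`, `t = F(r)`, and is at least `(t - F(r))² / 8`, so paths of small cost
are pseudo-orbits of `F`.

Exact orbits cost nothing, and `ρ*` is reached at cost tending to `0` by following the orbit of
`s` close to `ρ* = F(ρ*)` and then jumping there with `γ = f(ρ*)`. Conversely, a pseudo-orbit
from `s > 0` stays above a fixed positive level and therefore shadows the orbit of `s` in the
coordinate `1 / x`, while a point outside the orbit and different from its limit `ρ*` keeps a
positive distance from it. From `s = 0` every path of finite cost stays at `0`.
-/

open Filter Topology Set

lemma abs_sub_le_abs_inv_sub_inv {x y : ℝ} (hx : 0 < x) (hx1 : x ≤ 1) (hy : 0 < y)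
    (hy1 : y ≤ 1) : |x - y| ≤ |x⁻¹ - y⁻¹| := by
  have : x - y = x * y * (y⁻¹ - x⁻¹) := by field_simp
  rw [this, abs_mul, abs_sub_comm, abs_of_pos (mul_pos hx hy)]
  exact mul_le_of_le_one_left (abs_nonneg _) (mul_le_one₀ hx1 hy.le hy1)

lemma abs_inv_sub_inv_le {x y m m' : ℝ} (hm : 0 < m) (hm' : 0 < m') (hx : m ≤ x) (hy : m' ≤ y) :
    |x⁻¹ - y⁻¹| ≤ |x - y| / (m * m') := by
  have hx0 := hm.trans_le hx
  have hy0 := hm'.trans_le hy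
  rw [inv_sub_inv hx0.ne' hy0.ne', abs_div, abs_sub_comm, abs_of_pos (mul_pos hx0 hy0)]
  exact div_le_div_of_nonneg_left (abs_nonneg _) (mul_pos hm hm') (mul_le_mul hx hy hm'.le hx0.le)

lemma le_div_one_sub_of_le_add_mul {e : ℕ → ℝ} {A c : ℝ} {l : ℕ} (hc0 : 0 ≤ c) (hc1 : c < 1)
    (h0 : e 0 ≤ A / (1 - c)) (he : ∀ k < l, e (k + 1) ≤ A + c * e k) :
    ∀ k ≤ l, e k ≤ A / (1 - c) := by
  intro k hk
  induction k with
  | zero => exact h0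
  | succ k ih =>
    have hk' := Nat.lt_of_succ_le hk
    have : 1 - c ≠ 0 := by linarith
    calc e (k + 1) ≤ A + c * (A / (1 - c)) := (he k hk').trans (by gcongr; exact ih hk'.le)
      _ = A / (1 - c) := by field_simp; ring

lemma le_of_pseudoOrbit {F : ℝ → ℝ} {m η : ℝ} {l : ℕ} {ρ : ℕ → ℝ} (hF : MonotoneOn F (Ici m))
    (hη : η ≤ F m - m) (h0 : m ≤ ρ 0) (hρ : ∀ k < l, |ρ (k + 1) - F (ρ k)| < η) :
    ∀ k ≤ l, m ≤ ρ k := by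
  intro k hk
  induction k with
  | zero => exact h0
  | succ k ih =>
    have hk' := Nat.lt_of_succ_le hk
    have := hF self_mem_Ici (ih hk'.le) (ih hk'.le)
    linarith [(abs_lt.1 (hρ k hk')).1]

lemma exists_pos_le_dist_of_tendsto {X : Type*} [MetricSpace X] {u : ℕ → X} {x y : X}
    (hu : Tendsto u atTop (𝓝 x)) (hy : y ≠ x) (hne : ∀ n, u n ≠ y) :
    ∃ δ > 0, ∀ n, δ ≤ dist (u n) y := by
  have hK : y ∉ insert x (range u) := by
    rintro (h | ⟨n, hn⟩)
    exacts [hy h, hne n hn]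
  obtain ⟨δ, hδ, hball⟩ :=
    Metric.mem_nhds_iff.1 (hu.isCompact_insert_range.isClosed.compl_mem_nhds hK)
  exact ⟨δ, hδ, fun n => not_lt.1 fun h =>
    hball (Metric.mem_ball.2 h) (mem_insert_of_mem _ ⟨n, rfl⟩)⟩

lemma two_mul_sub_sqrt_mul_le_mul_log {p t : ℝ} (hp : 0 < p) (ht : 0 ≤ t) :
    2 * (t - √(t * p)) ≤ t * Real.log (t / p) := by
  rcases ht.eq_or_lt with rfl | ht
  · simp
  have hpt := div_pos hp ht
  have hlog : Real.log (p / t) ≤ 2 * (√(p / t) - 1) := by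
    have := Real.log_le_sub_one_of_pos (Real.sqrt_pos.2 hpt)
    rw [Real.log_sqrt hpt.le] at this
    linarith
  have hsqrt : t * √(p / t) = √(t * p) := by
    rw [show t * p = t ^ 2 * (p / t) by field_simp, Real.sqrt_mul (by positivity),
      Real.sqrt_sq ht.le]
  have hinv : Real.log (t / p) = -Real.log (p / t) := by rw [← Real.log_inv, inv_div]
  rw [hinv, ← hsqrt]
  nlinarith [mul_le_mul_of_nonneg_left hlog ht.le]

lemma sq_sub_div_four_le_kl {p t : ℝ} (hp : 0 < p) (hp1 : p < 1) (ht : 0 ≤ t) (ht1 : t ≤ 1) :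
    (t - p) ^ 2 / 4 ≤ t * Real.log (t / p) + (1 - t) * Real.log ((1 - t) / (1 - p)) := by
  have h₁ := two_mul_sub_sqrt_mul_le_mul_log hp ht
  have h₂ := two_mul_sub_sqrt_mul_le_mul_log (sub_pos.2 hp1) (sub_nonneg.2 ht1)
  rw [Real.sqrt_mul ht] at h₁
  rw [Real.sqrt_mul (sub_nonneg.2 ht1)] at h₂
  have hsq : (t - p) ^ 2 ≤ 4 * (√t - √p) ^ 2 := by
    have hsum : √t + √p ≤ 2 := by
      linarith [Real.sqrt_le_one.2 ht1, Real.sqrt_le_one.2 hp1.le]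
    have hfac : t - p = (√t - √p) * (√t + √p) := by
      linear_combination (-1) * Real.sq_sqrt ht + Real.sq_sqrt hp.le
    rw [hfac, mul_pow, mul_comm 4]
    gcongr
    nlinarith [Real.sqrt_nonneg t, Real.sqrt_nonneg p]
  -- the two bounds add up to the squared Hellinger distance
  nlinarith [Real.sq_sqrt ht, Real.sq_sqrt hp.le, Real.sq_sqrt (sub_nonneg.2 ht1),
    Real.sq_sqrt (sub_pos.2 hp1).le, sq_nonneg (√(1 - t) - √(1 - p))]

lemma ofReal_sq_sub_div_four_le_Irate {p : ℝ} (hp0 : 0 ≤ p) (hp1 : p ≤ 1) (t : ℝ) :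
    ENNReal.ofReal ((t - p) ^ 2 / 4) ≤ Irate p t := by
  unfold Irate
  split_ifs with ht hp hp0' ht0 ht1
  · exact ENNReal.ofReal_le_ofReal (sq_sub_div_four_le_kl hp.1 hp.2 ht.1 ht.2)
  · simp [ht0, le_antisymm hp0' hp0]
  all_goals first
    | exact le_top
    | simp [ht1, le_antisymm hp1 (not_lt.1 fun h => hp ⟨lt_of_not_ge hp0', h⟩)]

lemma Irate_self {p : ℝ} (hp0 : 0 ≤ p) (hp1 : p ≤ 1) : Irate p p = 0 := by
  rcases hp0.eq_or_lt with rfl | hp0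
  · simp [Irate]
  rcases hp1.eq_or_lt with rfl | hp1
  · simp [Irate]
  simp [Irate, hp0, hp1, hp0.le, hp1.le, hp0.ne', (sub_pos.2 hp1).ne']

lemma tendsto_Irate_nhds_zero {t : ℝ} (ht0 : 0 < t) (ht1 : t < 1) :
    Tendsto (fun p => Irate p t) (𝓝 t) (𝓝 0) := by
  set kl := fun p => t * Real.log (t / p) + (1 - t) * Real.log ((1 - t) / (1 - p))
  have hkl : ContinuousAt kl t := by
    have := ht0.ne'
    have : 1 - t ≠ 0 := by linarith
    fun_prop (disch := simp [*])
  have hlim := (ENNReal.continuous_ofReal.tendsto _).comp hkl.tendsto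
  simp only [kl, div_self ht0.ne', div_self (sub_pos.2 ht1).ne', Real.log_one, mul_zero,
    add_zero, ENNReal.ofReal_zero] at hlim
  refine hlim.congr' ?_
  filter_upwards [Ioo_mem_nhds ht0 ht1] with p hp
  simp [Irate, ht0.le, ht1.le, hp.1, hp.2]

noncomputable def rhoStar (σ a : ℝ) : ℝ := (σ * Real.exp (-a) - 1) / (σ - 1)

section Maps

variable {σ a : ℝ}

lemma fsel_denom_pos (hσ : 1 < σ) {r : ℝ} (hr : 0 ≤ r) : 0 < (σ - 1) * r + 1 := by
  nlinarith

lemma fsel_nonneg (hσ : 1 < σ) {r : ℝ} (hr : 0 ≤ r) : 0 ≤ fsel σ r :=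
  div_nonneg (by nlinarith) (fsel_denom_pos hσ hr).le

lemma fsel_pos (hσ : 1 < σ) {r : ℝ} (hr : 0 < r) : 0 < fsel σ r :=
  div_pos (by nlinarith) (fsel_denom_pos hσ hr.le)

lemma fsel_le_one (hσ : 1 < σ) {r : ℝ} (hr : 0 ≤ r) (hr1 : r ≤ 1) : fsel σ r ≤ 1 := by
  rw [fsel, div_le_one (fsel_denom_pos hσ hr)]
  nlinarith

lemma fsel_lt_one (hσ : 1 < σ) {r : ℝ} (hr : 0 ≤ r) (hr1 : r < 1) : fsel σ r < 1 := by
  rw [fsel, div_lt_one (fsel_denom_pos hσ hr)]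
  nlinarith

lemma monotoneOn_fsel (hσ : 1 < σ) : MonotoneOn (fsel σ) (Ici 0) := by
  intro r hr r' hr' hrr'
  rw [fsel, fsel, div_le_div_iff₀ (fsel_denom_pos hσ hr) (fsel_denom_pos hσ hr')]
  nlinarith

lemma continuousAt_fsel (hσ : 1 < σ) {r : ℝ} (hr : 0 ≤ r) : ContinuousAt (fsel σ) r :=
  (continuousAt_id.const_mul σ).div ((continuousAt_id.const_mul _).add continuousAt_const)
    (fsel_denom_pos hσ hr).ne'

lemma Fmap_zero : Fmap σ a 0 = 0 := by
  simp [Fmap, fsel]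

lemma Fmap_pos (hσ : 1 < σ) {r : ℝ} (hr : 0 < r) : 0 < Fmap σ a r :=
  mul_pos (Real.exp_pos _) (fsel_pos hσ hr)

lemma Fmap_le_one (hσ : 1 < σ) (ha : 0 ≤ a) {r : ℝ} (hr : 0 ≤ r) (hr1 : r ≤ 1) :
    Fmap σ a r ≤ 1 :=
  mul_le_one₀ (Real.exp_le_one_iff.2 (neg_nonpos.2 ha)) (fsel_nonneg hσ hr)
    (fsel_le_one hσ hr hr1)

lemma monotoneOn_Fmap (hσ : 1 < σ) : MonotoneOn (Fmap σ a) (Ici 0) :=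
  fun _ hr _ hr' hrr' => mul_le_mul_of_nonneg_left (monotoneOn_fsel hσ hr hr' hrr')
    (Real.exp_pos _).le

lemma iterate_Fmap_mem_Icc (hσ : 1 < σ) (ha : 0 ≤ a) {s : ℝ} (hs : s ∈ Icc 0 1) (n : ℕ) :
    (Fmap σ a)^[n] s ∈ Icc 0 1 := by
  induction n with
  | zero => exact hs
  | succ n ih =>
    rw [Function.iterate_succ_apply']
    exact ⟨mul_nonneg (Real.exp_pos _).le (fsel_nonneg hσ ih.1), Fmap_le_one hσ ha ih.1 ih.2⟩

lemma iterate_Fmap_pos (hσ : 1 < σ) {s : ℝ} (hs : 0 < s) (n : ℕ) : 0 < (Fmap σ a)^[n] s := by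
  induction n with
  | zero => exact hs
  | succ n ih => rw [Function.iterate_succ_apply']; exact Fmap_pos hσ ih

lemma exp_div_lt_one (hσ : 1 < σ) (hcrit : 1 < σ * Real.exp (-a)) : Real.exp a / σ < 1 := by
  rw [div_lt_one (by linarith), ← one_lt_div (Real.exp_pos a), div_eq_mul_inv, ← Real.exp_neg]
  exact hcrit

lemma rhoStar_pos (hσ : 1 < σ) (hcrit : 1 < σ * Real.exp (-a)) : 0 < rhoStar σ a :=
  div_pos (by linarith) (by linarith)

lemma rhoStar_lt_one (hσ : 1 < σ) (ha : 0 < a) : rhoStar σ a < 1 := by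
  rw [rhoStar, div_lt_one (by linarith)]
  nlinarith [Real.exp_lt_one_iff.2 (neg_lt_zero.2 ha)]

lemma Fmap_sub_self (hσ : 1 < σ) {x : ℝ} (hx : 0 ≤ x) :
    Fmap σ a x - x = x * (σ - 1) * (rhoStar σ a - x) / ((σ - 1) * x + 1) := by
  have hd := (fsel_denom_pos hσ hx).ne'
  have : σ - 1 ≠ 0 := by linarith
  rw [eq_div_iff hd, sub_mul, Fmap, fsel, mul_div_assoc', div_mul_cancel₀ _ hd, rhoStar]
  field_simp
  ring

lemma lt_Fmap_self (hσ : 1 < σ) {x : ℝ} (hx : 0 < x) (hxρ : x < rhoStar σ a) :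
    x < Fmap σ a x := by
  have h := Fmap_sub_self (a := a) hσ hx.le
  have : 0 < x * (σ - 1) * (rhoStar σ a - x) / ((σ - 1) * x + 1) := by
    have := fsel_denom_pos hσ hx.le
    have : 0 < σ - 1 := by linarith
    have : 0 < rhoStar σ a - x := by linarith
    positivity
  linarith

lemma Fmap_rhoStar (hσ : 1 < σ) (hcrit : 1 < σ * Real.exp (-a)) :
    Fmap σ a (rhoStar σ a) = rhoStar σ a := by
  simpa [sub_eq_zero] using Fmap_sub_self (a := a) hσ (rhoStar_pos hσ hcrit).le

lemma inv_Fmap (hσ : 1 < σ) {x : ℝ} (hx : 0 < x) :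
    (Fmap σ a x)⁻¹ = Real.exp a / σ * x⁻¹ + Real.exp a * (σ - 1) / σ := by
  have := (fsel_denom_pos hσ hx.le).ne'
  rw [Fmap, fsel, Real.exp_neg]
  field_simp
  ring

lemma inv_Fmap_sub_inv_Fmap (hσ : 1 < σ) {x y : ℝ} (hx : 0 < x) (hy : 0 < y) :
    (Fmap σ a x)⁻¹ - (Fmap σ a y)⁻¹ = Real.exp a / σ * (x⁻¹ - y⁻¹) := by
  rw [inv_Fmap hσ hx, inv_Fmap hσ hy]
  ring

lemma inv_iterate_Fmap_sub_inv_rhoStar (hσ : 1 < σ) (hcrit : 1 < σ * Real.exp (-a)) {s : ℝ}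
    (hs : 0 < s) (n : ℕ) :
    ((Fmap σ a)^[n] s)⁻¹ - (rhoStar σ a)⁻¹ =
      (Real.exp a / σ) ^ n * (s⁻¹ - (rhoStar σ a)⁻¹) := by
  induction n with
  | zero => simp
  | succ n ih =>
    conv_lhs => rw [Function.iterate_succ_apply', ← Fmap_rhoStar hσ hcrit]
    rw [inv_Fmap_sub_inv_Fmap hσ (iterate_Fmap_pos hσ hs n) (rhoStar_pos hσ hcrit), ih,
      pow_succ]
    ring

lemma tendsto_iterate_Fmap_rhoStar (hσ : 1 < σ) (hcrit : 1 < σ * Real.exp (-a)) {s : ℝ}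
    (hs : 0 < s) : Tendsto (fun n => (Fmap σ a)^[n] s) atTop (𝓝 (rhoStar σ a)) := by
  have hc := _root_.tendsto_pow_atTop_nhds_zero_of_lt_one
    (div_pos (Real.exp_pos a) (by linarith)).le (exp_div_lt_one hσ hcrit)
  have hinv : Tendsto (fun n => ((Fmap σ a)^[n] s)⁻¹) atTop (𝓝 (rhoStar σ a)⁻¹) := by
    simpa only [← inv_iterate_Fmap_sub_inv_rhoStar hσ hcrit hs, zero_mul, zero_add,
      sub_add_cancel] using (hc.mul_const (s⁻¹ - (rhoStar σ a)⁻¹)).add_const (rhoStar σ a)⁻¹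
  simpa using hinv.inv₀ (inv_ne_zero (rhoStar_pos hσ hcrit).ne')

end Maps

section Cost

variable {σ a : ℝ}

lemma Icost_fsel_Fmap (ha : 0 ≤ a) (r : ℝ) {r' : ℝ} (hr' : fsel σ r' ≠ 0) :
    Icost σ a r (fsel σ r') (Fmap σ a r') = Irate (fsel σ r) (fsel σ r') := by
  rw [Icost, if_neg hr', Fmap, mul_div_assoc, div_self hr', mul_one,
    Irate_self (Real.exp_pos _).le (Real.exp_le_one_iff.2 (neg_nonpos.2 ha)), mul_zero,
    add_zero]

lemma Icost_self (hσ : 1 < σ) (ha : 0 ≤ a) {r : ℝ} (hr : r ∈ Icc 0 1) :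
    Icost σ a r (fsel σ r) (Fmap σ a r) = 0 := by
  rcases hr.1.eq_or_lt with rfl | hr0
  · simp [Icost, Fmap_zero, fsel, Irate]
  · rw [Icost_fsel_Fmap ha r (fsel_pos hσ hr0).ne',
      Irate_self (fsel_nonneg hσ hr.1) (fsel_le_one hσ hr.1 hr.2)]

lemma eq_zero_of_Icost_zero_ne_top {γ t : ℝ} (h : Icost σ a 0 γ t ≠ ⊤) : t = 0 := by
  have hf : fsel σ 0 = 0 := by simp [fsel]
  by_contra ht
  refine h ?_
  by_cases hγ : γ = 0
  · simp [Icost, hγ, ht]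
  · simp [Icost, hf, Irate, hγ]

lemma ofReal_sq_sub_Fmap_div_eight_le_Icost (hσ : 1 < σ) (ha : 0 ≤ a) {r γ t : ℝ}
    (hr : r ∈ Icc 0 1) (hγ : γ ∈ Icc 0 1) :
    ENNReal.ofReal ((t - Fmap σ a r) ^ 2 / 8) ≤ Icost σ a r γ t := by
  set E := Real.exp (-a)
  have hE0 : 0 < E := Real.exp_pos _
  have hE1 : E ≤ 1 := Real.exp_le_one_iff.2 (neg_nonpos.2 ha)
  set p := fsel σ r
  have hp0 : 0 ≤ p := fsel_nonneg hσ hr.1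
  have hp1 : p ≤ 1 := fsel_le_one hσ hr.1 hr.2
  have hF : Fmap σ a r = E * p := rfl
  have hI₁ := ofReal_sq_sub_div_four_le_Irate hp0 hp1 γ
  rw [Icost, hF]
  rcases hγ.1.eq_or_lt with rfl | hγ0
  · by_cases ht : t = 0
    · simp only [ht, if_true, add_zero]
      refine le_trans (ENNReal.ofReal_le_ofReal ?_) hI₁
      nlinarith [mul_le_mul_of_nonneg_right (mul_le_one₀ hE1 hE0.le hE1) (sq_nonneg p)]
    · simp [ht]
  -- `γ·I(E, t/γ) ≥ γ(t/γ - E)²/4 ≥ (t - Eγ)²/4`,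
  -- and `(t - Ep)² ≤ 2(t - Eγ)² + 2E²(γ - p)²`
  have hI₂ : ENNReal.ofReal ((t - E * γ) ^ 2 / 4) ≤ ENNReal.ofReal γ * Irate E (t / γ) := by
    refine le_trans ?_ (mul_le_mul_right (ofReal_sq_sub_div_four_le_Irate hE0.le hE1 _) _)
    rw [← ENNReal.ofReal_mul hγ.1]
    refine ENNReal.ofReal_le_ofReal ?_
    rw [show γ * ((t / γ - E) ^ 2 / 4) = (t - E * γ) ^ 2 / 4 / γ by field_simp]
    exact le_div_self (by positivity) hγ0 hγ.2
  rw [if_neg hγ0.ne']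
  refine le_trans ?_ (add_le_add hI₁ hI₂)
  rw [← ENNReal.ofReal_add (by positivity) (by positivity)]
  refine ENNReal.ofReal_le_ofReal ?_
  nlinarith [sq_nonneg ((t - E * γ) - E * (γ - p)), mul_le_one₀ hE1 hE0.le hE1,
    mul_le_mul_of_nonneg_right (mul_le_one₀ hE1 hE0.le hE1) (sq_nonneg (γ - p))]

end Cost

section ZeroCost

variable {σ a : ℝ}

lemma Vcost_le_sum {s t : ℝ} {l : ℕ} (hl : 1 ≤ l) {ρ γ : ℕ → ℝ} (h0 : ρ 0 = s)
    (hlt : ρ l = t) (hρ : ∀ k ≤ l, ρ k ∈ Icc 0 1) (hγ : ∀ k < l, γ k ∈ Icc 0 1) :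
    Vcost σ a s t ≤ ∑ k ∈ Finset.range l, Icost σ a (ρ k) (γ k) (ρ (k + 1)) :=
  iInf₂_le_of_le l hl <| iInf₂_le_of_le ρ γ <| iInf₂_le_of_le h0 hlt <| iInf₂_le hρ hγ

lemma exists_path_of_Vcost_lt {s t : ℝ} {b : ℝ≥0∞} (h : Vcost σ a s t < b) :
    ∃ l, 1 ≤ l ∧ ∃ ρ γ : ℕ → ℝ, ρ 0 = s ∧ ρ l = t ∧ (∀ k ≤ l, ρ k ∈ Icc 0 1) ∧
      (∀ k < l, γ k ∈ Icc 0 1) ∧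
      ∑ k ∈ Finset.range l, Icost σ a (ρ k) (γ k) (ρ (k + 1)) < b := by
  simpa only [Vcost, iInf_lt_iff, exists_prop] using h

lemma Vcost_le_Icost_iterate (hσ : 1 < σ) (ha : 0 ≤ a) {s t γ : ℝ} (hs : s ∈ Icc 0 1)
    (ht : t ∈ Icc 0 1) (hγ : γ ∈ Icc 0 1) (n : ℕ) :
    Vcost σ a s t ≤ Icost σ a ((Fmap σ a)^[n] s) γ t := by
  have horb := iterate_Fmap_mem_Icc hσ ha hs
  let ρ : ℕ → ℝ := fun k => if k ≤ n then (Fmap σ a)^[k] s else t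
  let γ' : ℕ → ℝ := fun k => if k < n then fsel σ ((Fmap σ a)^[k] s) else γ
  have hρ : ∀ k, ρ k ∈ Icc 0 1 := fun k => by
    unfold ρ; split_ifs
    exacts [horb k, ht]
  have hγ' : ∀ k, γ' k ∈ Icc 0 1 := fun k => by
    unfold γ'; split_ifs
    exacts [⟨fsel_nonneg hσ (horb k).1, fsel_le_one hσ (horb k).1 (horb k).2⟩, hγ]
  have horbit_cost : ∀ k ∈ Finset.range n, Icost σ a (ρ k) (γ' k) (ρ (k + 1)) = 0 := by
    intro k hk
    have hk := Finset.mem_range.1 hk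
    simp only [ρ, γ', hk, hk.le, Nat.succ_le_of_lt hk, if_true, Function.iterate_succ_apply']
    exact Icost_self hσ ha (horb k)
  calc Vcost σ a s t ≤ ∑ k ∈ Finset.range (n + 1), Icost σ a (ρ k) (γ' k) (ρ (k + 1)) :=
        Vcost_le_sum n.succ_pos (by simp [ρ]) (by simp [ρ]) (fun k _ => hρ k) (fun k _ => hγ' k)
    _ = Icost σ a ((Fmap σ a)^[n] s) γ t := by
        rw [Finset.sum_range_succ, Finset.sum_eq_zero horbit_cost, zero_add]
        simp [ρ, γ']

lemma Vcost_iterate_eq_zero (hσ : 1 < σ) (ha : 0 ≤ a) {s : ℝ} (hs : s ∈ Icc 0 1) {l : ℕ}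
    (hl : 1 ≤ l) : Vcost σ a s ((Fmap σ a)^[l] s) = 0 := by
  obtain ⟨n, rfl⟩ := Nat.exists_eq_add_of_le' hl
  have horb := iterate_Fmap_mem_Icc hσ ha hs n
  refine le_antisymm ?_ zero_le
  calc Vcost σ a s ((Fmap σ a)^[n + 1] s)
      ≤ Icost σ a ((Fmap σ a)^[n] s) (fsel σ ((Fmap σ a)^[n] s)) ((Fmap σ a)^[n + 1] s) :=
        Vcost_le_Icost_iterate hσ ha hs (iterate_Fmap_mem_Icc hσ ha hs _)
          ⟨fsel_nonneg hσ horb.1, fsel_le_one hσ horb.1 horb.2⟩ n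
    _ = 0 := by rw [Function.iterate_succ_apply']; exact Icost_self hσ ha horb

lemma Vcost_rhoStar_eq_zero (hσ : 1 < σ) (ha : 0 < a) (hcrit : 1 < σ * Real.exp (-a)) {s : ℝ}
    (hs : s ∈ Ioc 0 1) : Vcost σ a s (rhoStar σ a) = 0 := by
  have hρ0 := rhoStar_pos hσ hcrit
  have hρ1 := rhoStar_lt_one hσ ha
  have hg : fsel σ (rhoStar σ a) ∈ Ioo 0 1 :=
    ⟨fsel_pos hσ hρ0, fsel_lt_one hσ hρ0.le hρ1⟩
  have hcost : Tendsto (fun n => Irate (fsel σ ((Fmap σ a)^[n] s)) (fsel σ (rhoStar σ a)))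
      atTop (𝓝 0) :=
    (tendsto_Irate_nhds_zero hg.1 hg.2).comp
      ((continuousAt_fsel hσ hρ0.le).tendsto.comp (tendsto_iterate_Fmap_rhoStar hσ hcrit hs.1))
  refine le_antisymm (ge_of_tendsto' hcost fun n => ?_) zero_le
  calc Vcost σ a s (rhoStar σ a)
      ≤ Icost σ a ((Fmap σ a)^[n] s) (fsel σ (rhoStar σ a)) (Fmap σ a (rhoStar σ a)) := by
        rw [Fmap_rhoStar hσ hcrit]
        exact Vcost_le_Icost_iterate hσ ha.le (Ioc_subset_Icc_self hs) ⟨hρ0.le, hρ1.le⟩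
          (Ioo_subset_Icc_self hg) n
    _ = Irate (fsel σ ((Fmap σ a)^[n] s)) (fsel σ (rhoStar σ a)) :=
        Icost_fsel_Fmap ha.le _ hg.1.ne'

lemma eq_zero_of_Vcost_zero_lt_top {t : ℝ} (h : Vcost σ a 0 t < ⊤) : t = 0 := by
  obtain ⟨l, -, ρ, γ, h0, hl, -, -, hsum⟩ := exists_path_of_Vcost_lt h
  have hfin := ENNReal.sum_lt_top.1 hsum
  have hzero : ∀ k ≤ l, ρ k = 0 := by
    intro k hk
    induction k with
    | zero => exact h0
    | succ k ih =>
      have hcost := (hfin k (Finset.mem_range.2 hk)).ne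
      rw [ih (Nat.le_of_succ_le hk)] at hcost
      exact eq_zero_of_Icost_zero_ne_top hcost
  exact hl ▸ hzero l le_rfl

end ZeroCost

section Shadowing

variable {σ a : ℝ}

lemma exists_pseudoOrbit_of_Vcost_lt (hσ : 1 < σ) (ha : 0 ≤ a) {s t η : ℝ} (hη : 0 < η)
    (h : Vcost σ a s t < ENNReal.ofReal (η ^ 2 / 8)) :
    ∃ l, 1 ≤ l ∧ ∃ ρ : ℕ → ℝ, ρ 0 = s ∧ ρ l = t ∧ (∀ k ≤ l, ρ k ∈ Icc 0 1) ∧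
      ∀ k < l, |ρ (k + 1) - Fmap σ a (ρ k)| < η := by
  obtain ⟨l, hl, ρ, γ, h0, hl', hρ, hγ, hsum⟩ := exists_path_of_Vcost_lt h
  refine ⟨l, hl, ρ, h0, hl', hρ, fun k hk => ?_⟩
  have hcost : ENNReal.ofReal ((ρ (k + 1) - Fmap σ a (ρ k)) ^ 2 / 8) < ENNReal.ofReal (η ^ 2 / 8) :=
    ((ofReal_sq_sub_Fmap_div_eight_le_Icost hσ ha (hρ k hk.le) (hγ k hk)).trans
      (Finset.single_le_sum (f := fun j => Icost σ a (ρ j) (γ j) (ρ (j + 1)))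
        (fun j _ => zero_le) (Finset.mem_range.2 hk))).trans_lt hsum
  have := (ENNReal.ofReal_lt_ofReal_iff (by positivity)).1 hcost
  exact abs_lt_of_sq_lt_sq (by linarith) hη.le

-- Each step contracts the error in `1 / x` by `e^a/σ` and adds at most `η / (m F(m))`.
lemma abs_inv_sub_inv_iterate_le_of_pseudoOrbit (hσ : 1 < σ) (hcrit : 1 < σ * Real.exp (-a))
    {s m η : ℝ} {l : ℕ} {ρ : ℕ → ℝ} (hm : 0 < m) (hms : m ≤ s) (hη0 : 0 ≤ η)
    (hη : η ≤ Fmap σ a m - m) (h0 : ρ 0 = s) (hρ : ∀ k < l, |ρ (k + 1) - Fmap σ a (ρ k)| < η) :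
    ∀ k ≤ l, |(ρ k)⁻¹ - ((Fmap σ a)^[k] s)⁻¹| ≤
      η / (m * Fmap σ a m) / (1 - Real.exp a / σ) := by
  have habove := le_of_pseudoOrbit ((monotoneOn_Fmap hσ).mono (Ici_subset_Ici.2 hm.le)) hη
    (h0 ▸ hms) hρ
  have hFm : 0 < Fmap σ a m := Fmap_pos hσ hm
  have hc1 : 0 < 1 - Real.exp a / σ := sub_pos.2 (exp_div_lt_one hσ hcrit)
  have hstart : |(ρ 0)⁻¹ - ((Fmap σ a)^[0] s)⁻¹| ≤ η / (m * Fmap σ a m) / (1 - Real.exp a / σ) := by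
    rw [h0, Function.iterate_zero_apply, sub_self, abs_zero]
    positivity
  refine le_div_one_sub_of_le_add_mul (div_pos (Real.exp_pos a) (by linarith)).le
    (exp_div_lt_one hσ hcrit) hstart fun k hk => ?_
  have hρk := hm.trans_le (habove k hk.le)
  have hsk := iterate_Fmap_pos (a := a) hσ (hm.trans_le hms) k
  calc |(ρ (k + 1))⁻¹ - ((Fmap σ a)^[k + 1] s)⁻¹|
      ≤ |(ρ (k + 1))⁻¹ - (Fmap σ a (ρ k))⁻¹| +
          |(Fmap σ a (ρ k))⁻¹ - (Fmap σ a ((Fmap σ a)^[k] s))⁻¹| := by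
        rw [Function.iterate_succ_apply']
        exact abs_sub_le _ _ _
    _ ≤ η / (m * Fmap σ a m) + Real.exp a / σ * |(ρ k)⁻¹ - ((Fmap σ a)^[k] s)⁻¹| := by
        rw [inv_Fmap_sub_inv_Fmap hσ hρk hsk, abs_mul,
          abs_of_pos (div_pos (Real.exp_pos a) (by linarith))]
        gcongr
        refine (abs_inv_sub_inv_le hm hFm (habove (k + 1) hk) ?_).trans ?_
        · exact monotoneOn_Fmap hσ hm.le hρk.le (habove k hk.le)
        · exact div_le_div_of_nonneg_right (hρ k hk).le (mul_pos hm hFm).le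

lemma exists_shadowing (hσ : 1 < σ) (ha : 0 ≤ a) (hcrit : 1 < σ * Real.exp (-a)) {s : ℝ}
    (hs : s ∈ Ioc 0 1) {δ : ℝ} (hδ : 0 < δ) :
    ∃ η > 0, ∀ (l : ℕ) (ρ : ℕ → ℝ), ρ 0 = s → (∀ k ≤ l, ρ k ∈ Icc 0 1) →
      (∀ k < l, |ρ (k + 1) - Fmap σ a (ρ k)| < η) → |ρ l - (Fmap σ a)^[l] s| < δ := by
  set c := Real.exp a / σ
  have hc1 : 0 < 1 - c := sub_pos.2 (exp_div_lt_one hσ hcrit)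
  have hmin := lt_min hs.1 (rhoStar_pos hσ hcrit)
  set m := min s (rhoStar σ a) / 2
  have hm : 0 < m := half_pos hmin
  have hms : m ≤ s := (half_le_self hmin.le).trans (min_le_left _ _)
  have hFm : m < Fmap σ a m := lt_Fmap_self hσ hm ((half_lt_self hmin).trans_le (min_le_right _ _))
  have hFm0 : 0 < Fmap σ a m := Fmap_pos hσ hm
  set η := min (Fmap σ a m - m) (δ * (1 - c) * m * Fmap σ a m / 2)
  have hη : 0 < η := lt_min (by linarith) (by positivity)
  refine ⟨η, hη, fun l ρ h0 hρ hstep => ?_⟩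
  have hsl := iterate_Fmap_mem_Icc hσ ha (Ioc_subset_Icc_self hs) l
  have hρl := hρ l le_rfl
  have habove := le_of_pseudoOrbit ((monotoneOn_Fmap hσ).mono (Ici_subset_Ici.2 hm.le))
    (min_le_left _ _) (h0 ▸ hms) hstep l le_rfl
  calc |ρ l - (Fmap σ a)^[l] s| ≤ |(ρ l)⁻¹ - ((Fmap σ a)^[l] s)⁻¹| :=
        abs_sub_le_abs_inv_sub_inv (hm.trans_le habove) hρl.2
          (iterate_Fmap_pos hσ hs.1 l) hsl.2
    _ ≤ η / (m * Fmap σ a m) / (1 - c) :=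
        abs_inv_sub_inv_iterate_le_of_pseudoOrbit hσ hcrit hm hms hη.le (min_le_left _ _) h0
          hstep l le_rfl
    _ ≤ δ / 2 := by
        rw [div_div, div_le_div_iff₀ (by positivity) two_pos]
        nlinarith [min_le_right (Fmap σ a m - m) (δ * (1 - c) * m * Fmap σ a m / 2)]
    _ < δ := half_lt_self hδ

lemma Vcost_ne_zero (hσ : 1 < σ) (ha : 0 ≤ a) (hcrit : 1 < σ * Real.exp (-a)) {s t : ℝ}
    (hs : s ∈ Ioc 0 1) (horb : ∀ l, 1 ≤ l → t ≠ (Fmap σ a)^[l] s) (hρ : t ≠ rhoStar σ a) :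
    Vcost σ a s t ≠ 0 := by
  obtain ⟨δ, hδ, hgap⟩ := exists_pos_le_dist_of_tendsto
    ((tendsto_add_atTop_iff_nat 1).2 (tendsto_iterate_Fmap_rhoStar hσ hcrit hs.1)) hρ
    fun n h => horb (n + 1) (Nat.le_add_left 1 n) h.symm
  obtain ⟨η, hη, hshadow⟩ := exists_shadowing hσ ha hcrit hs hδ
  intro hV
  obtain ⟨l, hl, ρ, h0, hl', hρ', hstep⟩ :=
    exists_pseudoOrbit_of_Vcost_lt hσ ha hη (hV ▸ ENNReal.ofReal_pos.2 (by positivity))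
  obtain ⟨n, rfl⟩ := Nat.exists_eq_add_of_le' hl
  have hclose := hshadow _ ρ h0 hρ' hstep
  rw [hl', ← Real.dist_eq, dist_comm] at hclose
  exact (hgap n).not_gt hclose

end Shadowing

theorem Vcost_eq_zero_iff_general (σ a : ℝ) (hσ : 1 < σ) (ha : 0 < a)
    (hcrit : 1 < σ * Real.exp (-a))
    (s t : ℝ) (hs : s ∈ Set.Icc (0 : ℝ) 1) :
    Vcost σ a s t = 0 ↔
      (s = 0 ∧ t = 0) ∨
      (∃ l : ℕ, 1 ≤ l ∧ t = (Fmap σ a)^[l] s) ∨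
      (s ≠ 0 ∧ t = (σ * Real.exp (-a) - 1) / (σ - 1)) := by
  constructor
  · intro hV
    rcases hs.1.eq_or_lt with rfl | hs0
    · exact Or.inl ⟨rfl, eq_zero_of_Vcost_zero_lt_top (hV ▸ ENNReal.zero_lt_top)⟩
    by_contra! h
    exact Vcost_ne_zero hσ ha.le hcrit ⟨hs0, hs.2⟩ h.2.1 (h.2.2 hs0.ne') hV
  · rintro (⟨rfl, rfl⟩ | ⟨l, hl, rfl⟩ | ⟨hs0, rfl⟩)
    · simpa [Fmap_zero] using Vcost_iterate_eq_zero (l := 1) hσ ha.le hs le_rfl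
    · exact Vcost_iterate_eq_zero hσ ha.le hs hl
    · exact Vcost_rhoStar_eq_zero hσ ha hcrit ⟨hs.1.lt_of_ne' hs0, hs.2⟩

/-- Characterization of the zeros of the cost function `V`: assuming
`σe^{−a} > 1`, for `s, t ∈ [0,1]`, `V(s,t) = 0` iff `s = t = 0`, or `t` is an
iterate `F^l(s)` with `l ≥ 1`, or `s ≠ 0` and `t = ρ* = (σe^{−a}−1)/(σ−1)`. -/
theorem Vcost_eq_zero_iff (σ a : ℝ) (hσ : 1 < σ) (ha : 0 < a)
    (hcrit : 1 < σ * Real.exp (-a))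
    (s t : ℝ) (hs : s ∈ Set.Icc (0 : ℝ) 1) (ht : t ∈ Set.Icc (0 : ℝ) 1) :
    Vcost σ a s t = 0 ↔
      (s = 0 ∧ t = 0) ∨
      (∃ l : ℕ, 1 ≤ l ∧ t = (Fmap σ a)^[l] s) ∨
      (s ≠ 0 ∧ t = (σ * Real.exp (-a) - 1) / (σ - 1)) :=
  Vcost_eq_zero_iff_general σ a hσ ha hcrit s t hs
end

section
/- (Perturbed iterates stay close to the iterates of F.) Assume σ > 1, a > 0 and σe^{−a} > 1. Let F(x) = e^{−a}·σx/((σ−1)x+1) and, for an integer m ≥ 1, let H_m(x) = F(x) − 1/m. Then for every integer n ≥ 0 and every x ∈ [0,1] such that the iterates H_m^k(x) belong to [0,1] for all 0 ≤ k ≤ n, one has H_m^n(x) ≥ F^n(x) − (1/m)·(σe^{−a})^{n+1}/(σe^{−a} − 1), where F^n and H_m^n denote n-fold iterates. -/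
/-!
Write `L = σe^{−a}`. On `[0, ∞)` the map `F` is non-decreasing and `L`-Lipschitz from above,
so as long as `H_m^n(x) ≥ 0` the gap `d_n = F^n(x) − H_m^n(x)` stays non-negative and obeys
`d_{n+1} ≤ L·d_n + 1/m`. Hence `d_n ≤ (1/m)·(1 + L + ⋯ + L^{n−1}) ≤ (1/m)·L^{n+1}/(L − 1)`.
-/

open Finset

noncomputable def Hmap (σ a : ℝ) (m : ℕ) (x : ℝ) : ℝ := Fmap σ a x - 1 / m

section PerturbedIterate

variable {f g : ℝ → ℝ} {S : Set ℝ} {L ε : ℝ}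

theorem iterate_sub_iterate_le_geom_sum (hL : 0 ≤ L) (hε : 0 ≤ ε) (hg : ∀ x, g x = f x - ε)
    (hmono : ∀ ⦃u v⦄, v ∈ S → v ≤ u → f v ≤ f u)
    (hlip : ∀ ⦃u v⦄, v ∈ S → v ≤ u → f u - f v ≤ L * (u - v))
    {x : ℝ} {n : ℕ} (hiter : ∀ k < n, g^[k] x ∈ S) :
    g^[n] x ≤ f^[n] x ∧ f^[n] x - g^[n] x ≤ ε * ∑ k ∈ range n, L ^ k := by
  induction n with
  | zero => simp
  | succ n ih =>
    obtain ⟨hle, hgap⟩ := ih fun k hk => hiter k (Nat.lt_succ_of_lt hk)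
    have hS : g^[n] x ∈ S := hiter n n.lt_succ_self
    rw [Function.iterate_succ_apply', Function.iterate_succ_apply', hg, geom_sum_succ]
    have hstep := hlip hS hle
    constructor
    · linarith [hmono hS hle]
    · nlinarith [mul_le_mul_of_nonneg_left hgap hL]

end PerturbedIterate

theorem geom_sum_le_pow_succ_div {L : ℝ} (hL : 1 < L) (n : ℕ) :
    ∑ k ∈ range n, L ^ k ≤ L ^ (n + 1) / (L - 1) := by
  rw [geom_sum_eq hL.ne']
  have hpow : L ^ n ≤ L ^ (n + 1) := pow_le_pow_right₀ hL.le n.le_succ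
  gcongr
  linarith

section Fmap

variable {σ a u v : ℝ}

theorem Fmap_sub_Fmap (hσ : 1 ≤ σ) (hu : 0 ≤ u) (hv : 0 ≤ v) :
    Fmap σ a u - Fmap σ a v
      = Real.exp (-a) * σ * (u - v) / (((σ - 1) * u + 1) * ((σ - 1) * v + 1)) := by
  have hdu : (σ - 1) * u + 1 ≠ 0 := by nlinarith
  have hdv : (σ - 1) * v + 1 ≠ 0 := by nlinarith
  unfold Fmap fsel
  rw [mul_div_assoc', mul_div_assoc', div_sub_div _ _ hdu hdv]
  ring

theorem Fmap_le_Fmap (hσ : 1 ≤ σ) (hv : 0 ≤ v) (hvu : v ≤ u) : Fmap σ a v ≤ Fmap σ a u := by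
  have : 0 ≤ Fmap σ a u - Fmap σ a v := by
    rw [Fmap_sub_Fmap hσ (hv.trans hvu) hv]
    have : 0 ≤ (σ - 1) * u + 1 := by nlinarith
    have : 0 ≤ (σ - 1) * v + 1 := by nlinarith
    have : 0 ≤ u - v := by linarith
    positivity
  linarith

theorem Fmap_sub_Fmap_le (hσ : 1 ≤ σ) (hv : 0 ≤ v) (hvu : v ≤ u) :
    Fmap σ a u - Fmap σ a v ≤ σ * Real.exp (-a) * (u - v) := by
  have hnum : 0 ≤ Real.exp (-a) * σ * (u - v) := by
    have : 0 ≤ u - v := by linarith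
    positivity
  have hden : 1 ≤ ((σ - 1) * u + 1) * ((σ - 1) * v + 1) :=
    one_le_mul_of_one_le_of_one_le (by nlinarith) (by nlinarith)
  rw [Fmap_sub_Fmap hσ (hv.trans hvu) hv]
  calc Real.exp (-a) * σ * (u - v) / (((σ - 1) * u + 1) * ((σ - 1) * v + 1))
      ≤ Real.exp (-a) * σ * (u - v) := div_le_self hnum hden
    _ = σ * Real.exp (-a) * (u - v) := by ring

end Fmap

theorem Hmap_iterate_ge_general (σ a : ℝ) (hσ : 1 < σ)
    (hcrit : 1 < σ * Real.exp (-a)) (m : ℕ) (n : ℕ)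
    (x : ℝ)
    (hiter : ∀ k ≤ n, (Hmap σ a m)^[k] x ∈ Set.Icc (0 : ℝ) 1) :
    (Fmap σ a)^[n] x - (1 / m) * (σ * Real.exp (-a)) ^ (n + 1) / (σ * Real.exp (-a) - 1)
      ≤ (Hmap σ a m)^[n] x := by
  obtain ⟨-, hgap⟩ := iterate_sub_iterate_le_geom_sum (f := Fmap σ a) (g := Hmap σ a m)
    (S := Set.Ici 0) (by linarith) (by positivity) (fun _ => rfl)
    (fun _ _ hv hvu => Fmap_le_Fmap hσ.le hv hvu)
    (fun _ _ hv hvu => Fmap_sub_Fmap_le hσ.le hv hvu) (fun k hk => (hiter k hk.le).1)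
  have hgeom := mul_le_mul_of_nonneg_left (geom_sum_le_pow_succ_div hcrit n)
    (by positivity : (0 : ℝ) ≤ 1 / m)
  rw [← mul_div_assoc] at hgeom
  linarith

/-- Perturbed iterates stay close to the iterates of `F`:
`H_m^n(x) ≥ F^n(x) − (1/m)·(σe^{−a})^{n+1}/(σe^{−a} − 1)`. -/
theorem Hmap_iterate_ge (σ a : ℝ) (hσ : 1 < σ) (ha : 0 < a)
    (hcrit : 1 < σ * Real.exp (-a)) (m : ℕ) (hm : 1 ≤ m) (n : ℕ)
    (x : ℝ) (hx : x ∈ Set.Icc (0 : ℝ) 1)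
    (hiter : ∀ k ≤ n, (Hmap σ a m)^[k] x ∈ Set.Icc (0 : ℝ) 1) :
    (Fmap σ a)^[n] x - (1 / m) * (σ * Real.exp (-a)) ^ (n + 1) / (σ * Real.exp (-a) - 1)
      ≤ (Hmap σ a m)^[n] x :=
  Hmap_iterate_ge_general σ a hσ hcrit m n x hiter
end

section
/- (Reversibility of the lumped mutation matrix with respect to the binomial law.) For all b, c ∈ {0,…,ℓ}, one has ℬ(b)·M_H(b,c) = ℬ(c)·M_H(c,b). In particular, ℬ is an invariant probability measure for M_H. -/
open Finset

/-- The binomial law `ℬ(ℓ, 1−1/κ)`. -/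
noncomputable def Bbin (κ ℓ : ℕ) (b : ℕ) : ℝ :=
  (ℓ.choose b : ℝ) * (1 - 1 / κ) ^ b * (1 / κ) ^ (ℓ - b)

open Nat in
/-- Four-block multinomial symmetry. -/
lemma choose4 (a k l m : ℕ) :
    (a+k+l+m).choose (l+m) * ((a+k).choose k * (l+m).choose l)
  = (a+k+l+m).choose (k+m) * ((a+l).choose l * (k+m).choose k) := by
  apply Nat.eq_of_mul_eq_mul_right (show 0 < a ! * k ! * l ! * m ! from by positivity)
  have e1 : (a+k).choose k * a ! * k ! = (a+k)! :=
    Nat.add_choose_mul_factorial_mul_factorial a k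
  have e2 : (l+m).choose l * m ! * l ! = (l+m)! := by
    rw [Nat.add_comm l m]; exact Nat.add_choose_mul_factorial_mul_factorial m l
  have e3 : (a+k+l+m).choose (l+m) * (a+k)! * (l+m)! = (a+k+l+m)! := by
    rw [show a+k+l+m = (a+k)+(l+m) by ring]
    exact Nat.add_choose_mul_factorial_mul_factorial (a+k) (l+m)
  have e4 : (a+l).choose l * a ! * l ! = (a+l)! :=
    Nat.add_choose_mul_factorial_mul_factorial a l
  have e5 : (k+m).choose k * m ! * k ! = (k+m)! := by
    rw [Nat.add_comm k m]; exact Nat.add_choose_mul_factorial_mul_factorial m k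
  have e6 : (a+k+l+m).choose (k+m) * (a+l)! * (k+m)! = (a+k+l+m)! := by
    rw [show a+k+l+m = (a+l)+(k+m) by ring]
    exact Nat.add_choose_mul_factorial_mul_factorial (a+l) (k+m)
  calc (a+k+l+m).choose (l+m) * ((a+k).choose k * (l+m).choose l) * (a ! * k ! * l ! * m !)
      = (a+k+l+m).choose (l+m) * ((a+k).choose k * a ! * k !) * ((l+m).choose l * m ! * l !) := by
        ring
    _ = (a+k+l+m).choose (l+m) * (a+k)! * (l+m)! := by rw [e1, e2]
    _ = (a+k+l+m)! := e3
    _ = (a+k+l+m).choose (k+m) * (a+l)! * (k+m)! := e6.symm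
    _ = (a+k+l+m).choose (k+m) * ((a+l).choose l * a ! * l !) * ((k+m).choose k * m ! * k !) := by
        rw [e4, e5]
    _ = (a+k+l+m).choose (k+m) * ((a+l).choose l * (k+m).choose k) * (a ! * k ! * l ! * m !) := by
        ring

/-- Scalar detailed-balance identity. -/
lemma scalar4 (c q : ℝ) (hc0 : c ≠ 0) (hc1 : c - 1 ≠ 0) (a k l m : ℕ) :
    (1 - 1/c)^(l+m) * (1/c)^(a+k) * (q^k * (q/(c-1))^l)
  = (1 - 1/c)^(k+m) * (1/c)^(a+l) * (q^l * (q/(c-1))^k) := by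
  have h : (1 : ℝ) - 1/c = (c-1)/c := by field_simp
  rw [h, div_pow, div_pow, div_pow, div_pow, div_pow, div_pow, one_pow, one_pow]
  field_simp
  ring

/-- Termwise detailed balance. -/
lemma term_eq' (κ ℓ : ℕ) (hκ : 2 ≤ κ) (q : ℝ) (b c k l : ℕ)
    (hb : b ≤ ℓ) (hk : k ≤ ℓ - b) (hl : l ≤ b) (hbc : c + l = b + k) :
    Bbin κ ℓ b * (((ℓ - b).choose k : ℝ) * (b.choose l : ℝ) * q ^ k *
        (1 - q) ^ (ℓ - b - k) * (q / ((κ : ℝ) - 1)) ^ l * (1 - q / ((κ : ℝ) - 1)) ^ (b - l))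
  = Bbin κ ℓ c * (((ℓ - c).choose l : ℝ) * (c.choose k : ℝ) * q ^ l *
        (1 - q) ^ (ℓ - c - l) * (q / ((κ : ℝ) - 1)) ^ k * (1 - q / ((κ : ℝ) - 1)) ^ (c - k)) := by
  have hκ0 : (κ : ℝ) ≠ 0 := by positivity
  have hκ1 : (κ : ℝ) - 1 ≠ 0 := by
    have : (2 : ℝ) ≤ (κ : ℝ) := by exact_mod_cast hκ
    linarith
  set a := ℓ - b - k with ha
  set m := b - l with hm
  rw [show ℓ - b = a + k by omega, show ℓ - c - l = a by omega, show ℓ - c = a + l by omega,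
    show c - k = m by omega, show b = l + m by omega, show c = k + m by omega,
    show ℓ = a + k + l + m by omega]
  unfold Bbin
  rw [show a + k + l + m - (l + m) = a + k by omega,
    show a + k + l + m - (k + m) = a + l by omega]
  have hC : ((a+k+l+m).choose (l+m) : ℝ) * (((a+k).choose k : ℝ) * ((l+m).choose l : ℝ))
      = ((a+k+l+m).choose (k+m) : ℝ) * (((a+l).choose l : ℝ) * ((k+m).choose k : ℝ)) := by
    exact_mod_cast congrArg (Nat.cast (R := ℝ)) (choose4 a k l m)
  have hS := scalar4 (κ : ℝ) q hκ0 hκ1 a k l m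
  calc ((a+k+l+m).choose (l+m) : ℝ) * (1 - 1/(κ:ℝ))^(l+m) * (1/(κ:ℝ))^(a+k) *
        (((a+k).choose k : ℝ) * ((l+m).choose l : ℝ) * q^k * (1-q)^a *
          (q/((κ:ℝ)-1))^l * (1 - q/((κ:ℝ)-1))^m)
      = (((a+k+l+m).choose (l+m) : ℝ) * (((a+k).choose k : ℝ) * ((l+m).choose l : ℝ))) *
          ((1 - 1/(κ:ℝ))^(l+m) * (1/(κ:ℝ))^(a+k) * (q^k * (q/((κ:ℝ)-1))^l)) *
          ((1-q)^a * (1 - q/((κ:ℝ)-1))^m) := by ring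
    _ = (((a+k+l+m).choose (k+m) : ℝ) * (((a+l).choose l : ℝ) * ((k+m).choose k : ℝ))) *
          ((1 - 1/(κ:ℝ))^(k+m) * (1/(κ:ℝ))^(a+l) * (q^l * (q/((κ:ℝ)-1))^k)) *
          ((1-q)^a * (1 - q/((κ:ℝ)-1))^m) := by rw [hC, hS]
    _ = _ := by ring

/-- `MH` as a sum over the full square, using that out-of-range binomial
coefficients vanish. -/
lemma MH_ext (κ ℓ : ℕ) (q : ℝ) (b c : ℕ) (hb : b ≤ ℓ) :
    MH κ ℓ q b c = ∑ k ∈ range (ℓ + 1), ∑ l ∈ range (ℓ + 1),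
      (if (k : ℤ) - (l : ℤ) = (c : ℤ) - (b : ℤ) then
        ((ℓ - b).choose k : ℝ) * (b.choose l : ℝ) * q ^ k * (1 - q) ^ (ℓ - b - k) *
          (q / ((κ : ℝ) - 1)) ^ l * (1 - q / ((κ : ℝ) - 1)) ^ (b - l)
      else 0) := by
  unfold MH
  rw [← Finset.sum_subset (Finset.range_subset_range.mpr (show ℓ - b + 1 ≤ ℓ + 1 by omega))
    (fun x hx hx' => ?_)]
  · refine Finset.sum_congr rfl fun k hk => ?_
    rw [← Finset.sum_subset (Finset.range_subset_range.mpr (show b + 1 ≤ ℓ + 1 by omega))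
      (fun y hy hy' => ?_)]
    have : b.choose y = 0 := Nat.choose_eq_zero_of_lt (by simp [Finset.mem_range] at hy' ⊢; omega)
    split <;> simp [this]
  · apply Finset.sum_eq_zero
    intro y hy
    have : (ℓ - b).choose x = 0 :=
      Nat.choose_eq_zero_of_lt (by simp [Finset.mem_range] at hx'; omega)
    split <;> simp [this]

/-- Binomial theorem normalization. -/
lemma binom_one (x : ℝ) (n : ℕ) :
    ∑ k ∈ range (n + 1), (n.choose k : ℝ) * x ^ k * (1 - x) ^ (n - k) = 1 := by
  have h := add_pow x (1 - x) n
  simp only [add_sub_cancel, one_pow] at h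
  calc ∑ k ∈ range (n + 1), (n.choose k : ℝ) * x ^ k * (1 - x) ^ (n - k)
      = ∑ k ∈ range (n + 1), x ^ k * (1 - x) ^ (n - k) * (n.choose k : ℝ) :=
        Finset.sum_congr rfl fun k _ => by ring
    _ = 1 := h.symm

/-- Rows of `MH` sum to one. -/
lemma MH_rowsum (κ ℓ : ℕ) (q : ℝ) (c : ℕ) (hc : c ≤ ℓ) :
    ∑ b ∈ range (ℓ + 1), MH κ ℓ q c b = 1 := by
  unfold MH
  rw [Finset.sum_comm]
  have step : ∀ k ∈ range (ℓ - c + 1),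
      (∑ b ∈ range (ℓ + 1), ∑ l ∈ range (c + 1),
        if (k : ℤ) - (l : ℤ) = (b : ℤ) - (c : ℤ) then
          ((ℓ - c).choose k : ℝ) * (c.choose l : ℝ) * q ^ k * (1 - q) ^ (ℓ - c - k) *
            (q / ((κ : ℝ) - 1)) ^ l * (1 - q / ((κ : ℝ) - 1)) ^ (c - l)
        else 0)
      = ∑ l ∈ range (c + 1),
          ((ℓ - c).choose k : ℝ) * (c.choose l : ℝ) * q ^ k * (1 - q) ^ (ℓ - c - k) *
            (q / ((κ : ℝ) - 1)) ^ l * (1 - q / ((κ : ℝ) - 1)) ^ (c - l) := by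
    intro k hk
    rw [Finset.sum_comm]
    refine Finset.sum_congr rfl fun l hl => ?_
    simp only [Finset.mem_range] at hk hl
    have hcond : ∀ b : ℕ, ((k : ℤ) - (l : ℤ) = (b : ℤ) - (c : ℤ)) ↔ b = c + k - l := by
      intro b; omega
    calc (∑ b ∈ range (ℓ + 1),
          if (k : ℤ) - (l : ℤ) = (b : ℤ) - (c : ℤ) then
            ((ℓ - c).choose k : ℝ) * (c.choose l : ℝ) * q ^ k * (1 - q) ^ (ℓ - c - k) *
              (q / ((κ : ℝ) - 1)) ^ l * (1 - q / ((κ : ℝ) - 1)) ^ (c - l)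
          else 0)
        = ∑ b ∈ range (ℓ + 1),
          if b = c + k - l then
            ((ℓ - c).choose k : ℝ) * (c.choose l : ℝ) * q ^ k * (1 - q) ^ (ℓ - c - k) *
              (q / ((κ : ℝ) - 1)) ^ l * (1 - q / ((κ : ℝ) - 1)) ^ (c - l)
          else 0 := Finset.sum_congr rfl fun b _ => if_congr (hcond b) rfl rfl
      _ = _ := by
          rw [Finset.sum_ite_eq' (range (ℓ + 1))]
          rw [if_pos (Finset.mem_range.mpr (by omega))]
  rw [Finset.sum_congr rfl step]
  have : ∑ k ∈ range (ℓ - c + 1), ∑ l ∈ range (c + 1),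
      ((ℓ - c).choose k : ℝ) * (c.choose l : ℝ) * q ^ k * (1 - q) ^ (ℓ - c - k) *
        (q / ((κ : ℝ) - 1)) ^ l * (1 - q / ((κ : ℝ) - 1)) ^ (c - l)
    = (∑ k ∈ range (ℓ - c + 1), ((ℓ - c).choose k : ℝ) * q ^ k * (1 - q) ^ (ℓ - c - k)) *
      (∑ l ∈ range (c + 1), (c.choose l : ℝ) * (q / ((κ : ℝ) - 1)) ^ l *
        (1 - q / ((κ : ℝ) - 1)) ^ (c - l)) := by
    rw [Finset.sum_mul_sum]
    exact Finset.sum_congr rfl fun k _ => Finset.sum_congr rfl fun l _ => by ring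
  rw [this, binom_one, binom_one, one_mul]

/-- The lumped mutation matrix is reversible with respect to the binomial law
`ℬ(ℓ, 1−1/κ)`: `ℬ(b)·M_H(b,c) = ℬ(c)·M_H(c,b)`. In particular `ℬ` is an
invariant probability measure for `M_H`. -/
theorem MH_reversible (κ ℓ : ℕ) (hκ : 2 ≤ κ) (hℓ : 1 ≤ ℓ)
    (q : ℝ) (hq0 : 0 < q) (hq1 : q < 1 - 1 / κ) :
    (∀ b ≤ ℓ, ∀ c ≤ ℓ, Bbin κ ℓ b * MH κ ℓ q b c = Bbin κ ℓ c * MH κ ℓ q c b) ∧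
    (∀ c ≤ ℓ, ∑ b ∈ range (ℓ + 1), Bbin κ ℓ b * MH κ ℓ q b c = Bbin κ ℓ c) := by
  have hrev : ∀ b ≤ ℓ, ∀ c ≤ ℓ, Bbin κ ℓ b * MH κ ℓ q b c = Bbin κ ℓ c * MH κ ℓ q c b := by
    intro b hb c hc
    rw [MH_ext κ ℓ q b c hb, MH_ext κ ℓ q c b hc]
    simp only [Finset.mul_sum]
    conv_rhs => rw [Finset.sum_comm]
    refine Finset.sum_congr rfl fun k hk => Finset.sum_congr rfl fun l hl => ?_
    simp only [Finset.mem_range] at hk hl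
    by_cases h1 : (k : ℤ) - (l : ℤ) = (c : ℤ) - (b : ℤ)
    · rw [if_pos h1, if_pos (show (l : ℤ) - (k : ℤ) = (b : ℤ) - (c : ℤ) by omega)]
      by_cases hk' : k ≤ ℓ - b
      · by_cases hl' : l ≤ b
        · exact term_eq' κ ℓ hκ q b c k l hb hk' hl' (by omega)
        · rw [Nat.choose_eq_zero_of_lt (show b < l by omega),
            Nat.choose_eq_zero_of_lt (show c < k by omega)]
          simp
      · rw [Nat.choose_eq_zero_of_lt (show ℓ - b < k by omega),
          Nat.choose_eq_zero_of_lt (show ℓ - c < l by omega)]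
        simp
    · rw [if_neg h1, if_neg (show ¬((l : ℤ) - (k : ℤ) = (b : ℤ) - (c : ℤ)) by omega)]
      simp
  refine ⟨hrev, fun c hc => ?_⟩
  calc ∑ b ∈ range (ℓ + 1), Bbin κ ℓ b * MH κ ℓ q b c
      = ∑ b ∈ range (ℓ + 1), Bbin κ ℓ c * MH κ ℓ q c b :=
        Finset.sum_congr rfl fun b hb =>
          hrev b (Nat.lt_succ_iff.mp (Finset.mem_range.mp hb)) c hc
    _ = Bbin κ ℓ c * ∑ b ∈ range (ℓ + 1), MH κ ℓ q c b := by rw [Finset.mul_sum]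
    _ = Bbin κ ℓ c := by rw [MH_rowsum κ ℓ q c hc, mul_one]
end
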